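/- arXiv:1905.00483 — 4 statements merged into one kernel-verified Lean document; each statement's English description precedes it below -/
import Mathlib

section
/- Let (P,σ) be a continuous orthonormal system on ℝ⁺, i.e., for σ-a.e. k the function r ↦ P(r,k) is locally square integrable on ℝ⁺, and for every f ∈ L²(ℝ⁺) and every a > 0 one has ∫_ℝ |∫₀^a f(r)P(r,k)dr|² dσ(k) = ∫₀^a |f(r)|² dr. If L := ∫₀^∞ |f(r)|² log²(2+r) dr < ∞, then the sequence of partial integrals n ↦ ∫₀^n f(r)P(r,k)dr converges for σ-a.e. k ∈ ℝ, and the maximal function M(k) := sup_{n∈ℕ} |∫₀^n f(r)P(r,k)dr| satisfies ‖M‖_{L²_σ(ℝ)} ≤ C·L^{1/2} for some absolute constant C. -/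
open MeasureTheory Set Filter Function
open scoped ENNReal NNReal

/-!
Write `D a b k = ∫_(a, b] f r P(r, k) dr`. For `2^m ≤ n < 2^(m+1)`,
`D 0 n = D 0 1 + ∑_{i < m} D (2^i) (2^(i+1)) + D (2^m) n`, and Parseval on `(0, b]` applied to `f`
cut off to `(a, b]` gives `∫ |D a b|² dσ = ∫_(a, b] |f|²`. The remainder `D (2^m) n` is controlled
by the Menchov–Rademacher inequality: splitting `(2^m, n]` along the binary expansion of `n - 2^m`
and using Cauchy–Schwarz, `|D (2^m) n|² ≤ (m + 1) ∑_I |D I|²` over all dyadic subintervals `I` of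
`(2^m, 2^(m+1)]`, a sum whose σ-integral is `(m + 1)² ∫_(2^m, 2^(m+1)] |f|²`. The dyadic pieces are
summed by Cauchy–Schwarz with weights `1 / (i + 1)`. Hence `sup_n |D 0 n|²` is dominated by a
function whose σ-integral is at most `∑_m (m + 1)² ∫_(2^m, 2^(m+1)] |f|² ≲ ∫ |f|² log²(2 + r)`;
it is finite σ-a.e., and where it is finite the same decomposition shows that `D 0 n` converges.

Where `f P(·, k)` is not integrable on `(0, n]` the Bochner integral is the junk value `0`, from
that `n` on; additivity of `D · · k` is only available below such `n`.
-/

/-- `dyadicSum e m c` is the sum of `e a b` over all dyadic subintervals `[a, b]` of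
`[c, c + 2 ^ m]` of lengths `1, 2, …, 2 ^ m`: the recursion splits `[c, c + 2 ^ (m + 1)]` into its
two halves. -/
def dyadicSum {M : Type*} [AddCommMonoid M] (e : ℕ → ℕ → M) : ℕ → ℕ → M
  | 0, c => e c (c + 1)
  | m + 1, c => dyadicSum e m c + dyadicSum e m (c + 2 ^ m) + e c (c + 2 ^ (m + 1))

section DyadicSum

variable {M : Type*} [AddCommMonoid M]

theorem map_dyadicSum {N F : Type*} [AddCommMonoid N] [FunLike F M N] [AddMonoidHomClass F M N]
    (φ : F) (e : ℕ → ℕ → M) (m c : ℕ) :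
    φ (dyadicSum e m c) = dyadicSum (fun a b => φ (e a b)) m c := by
  induction m generalizing c with
  | zero => rfl
  | succ m ih => simp only [dyadicSum, map_add, ih]

variable [PartialOrder M] [CanonicallyOrderedAdd M]

theorem le_dyadicSum (e : ℕ → ℕ → M) (m c : ℕ) : e c (c + 2 ^ m) ≤ dyadicSum e m c := by
  cases m with
  | zero => exact le_rfl
  | succ m => exact le_add_self

theorem dyadicSum_le_succ (e : ℕ → ℕ → M) (m c : ℕ) : dyadicSum e m c ≤ dyadicSum e (m + 1) c :=
  le_add_right (le_add_right le_rfl)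

end DyadicSum

section Additive

variable {E : Type*} [SeminormedAddCommGroup E]

def IsAdditiveUpTo (F : ℕ → ℕ → E) (n : ℕ) : Prop :=
  ∀ a b c, a ≤ b → b ≤ c → c ≤ n → F a c = F a b + F b c

variable {F : ℕ → ℕ → E} {n : ℕ}

theorem IsAdditiveUpTo.apply_self (hF : IsAdditiveUpTo F n) {a : ℕ} (ha : a ≤ n) : F a a = 0 := by
  simpa using hF a a a le_rfl le_rfl ha

theorem IsAdditiveUpTo.apply_zero_two_pow (hF : IsAdditiveUpTo F n) {j : ℕ} (hj : 2 ^ j ≤ n) :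
    F 0 (2 ^ j) = F 0 1 + ∑ i ∈ Finset.range j, F (2 ^ i) (2 ^ (i + 1)) := by
  induction j with
  | zero => simp
  | succ j ih =>
    have hj' : 2 ^ j ≤ 2 ^ (j + 1) := Nat.pow_le_pow_right two_pos j.le_succ
    rw [hF 0 (2 ^ j) _ (Nat.zero_le _) hj' hj, ih (hj'.trans hj), Finset.sum_range_succ, add_assoc]

theorem IsAdditiveUpTo.eq_add_sum_add (hF : IsAdditiveUpTo F n) (hn : n ≠ 0) :
    F 0 n = F 0 1 + ∑ i ∈ Finset.range (Nat.log 2 n), F (2 ^ i) (2 ^ (i + 1))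
      + F (2 ^ Nat.log 2 n) n := by
  have h := Nat.pow_log_le_self 2 hn
  rw [hF 0 _ n (Nat.zero_le _) h le_rfl, hF.apply_zero_two_pow h]

end Additive

section MenchovRademacherInequality

variable {E : Type*} [SeminormedAddCommGroup E] {F : ℕ → ℕ → E} {n : ℕ}

theorem NNReal.add_sq_le_of_sq_le {x y X Z : ℝ≥0} {m : ℕ} (hx : x ^ 2 ≤ X)
    (hy : y ^ 2 ≤ (m + 1) * Z) : (x + y) ^ 2 ≤ (m + 2) * (X + Z) := by
  rw [← NNReal.coe_le_coe] at hx hy ⊢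
  push_cast at hx hy ⊢
  have hm : (0 : ℝ) < m + 1 := by positivity
  refine le_of_mul_le_mul_left ?_ hm
  -- `(m + 1) (m + 2) x² + (m + 2) y² - (m + 1) (x + y)² = ((m + 1) x - y)²`
  nlinarith [sq_nonneg (((m : ℝ) + 1) * x - y),
    mul_le_mul_of_nonneg_left hx (by positivity : (0 : ℝ) ≤ (m + 1) * (m + 2)),
    mul_le_mul_of_nonneg_left hy (by positivity : (0 : ℝ) ≤ m + 2)]

theorem IsAdditiveUpTo.nnnorm_sq_le_mul_dyadicSum (hF : IsAdditiveUpTo F n) {m c j : ℕ}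
    (hj : j ≤ 2 ^ m) (hn : c + j ≤ n) :
    ‖F c (c + j)‖₊ ^ 2 ≤ (m + 1) * dyadicSum (fun a b => ‖F a b‖₊ ^ 2) m c := by
  induction m generalizing c j with
  | zero =>
    interval_cases j
    · simp [hF.apply_self (by omega : c ≤ n)]
    · simp [dyadicSum]
  | succ m ih =>
    set S := dyadicSum (fun a b => ‖F a b‖₊ ^ 2)
    by_cases hjm : j ≤ 2 ^ m
    · calc ‖F c (c + j)‖₊ ^ 2 ≤ (m + 1) * S m c := ih hjm hn
        _ ≤ ((m + 1 : ℕ) + 1) * S (m + 1) c := by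
          gcongr
          · exact le_add_right le_rfl
          · exact dyadicSum_le_succ _ m c
    · have hsplit : F c (c + j) = F c (c + 2 ^ m) + F (c + 2 ^ m) (c + 2 ^ m + (j - 2 ^ m)) := by
        rw [show c + 2 ^ m + (j - 2 ^ m) = c + j by omega]
        exact hF _ _ _ (by omega) (by omega) hn
      have hsecond := ih (c := c + 2 ^ m) (j := j - 2 ^ m) (by omega) (by omega)
      calc ‖F c (c + j)‖₊ ^ 2
          ≤ (‖F c (c + 2 ^ m)‖₊ + ‖F (c + 2 ^ m) (c + 2 ^ m + (j - 2 ^ m))‖₊) ^ 2 := by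
            rw [hsplit]; gcongr; exact nnnorm_add_le _ _
        _ ≤ (m + 2) * (S m c + S m (c + 2 ^ m)) :=
          NNReal.add_sq_le_of_sq_le (le_dyadicSum (fun a b => ‖F a b‖₊ ^ 2) m c) hsecond
        _ ≤ ((m + 1 : ℕ) + 1) * S (m + 1) c := by
          push_cast
          rw [add_assoc, one_add_one_eq_two]
          gcongr
          exact le_add_right le_rfl

end MenchovRademacherInequality

section Majorant

theorem NNReal.add_add_sq_le (a b c : ℝ≥0) : (a + b + c) ^ 2 ≤ 3 * (a ^ 2 + b ^ 2 + c ^ 2) := by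
  simpa [Fin.sum_univ_three] using sq_sum_le_card_mul_sum_sq (s := Finset.univ) (f := ![a, b, c])

theorem sum_range_inv_succ_sq_le_two (m : ℕ) : ∑ i ∈ Finset.range m, ((i : ℝ) + 1)⁻¹ ^ 2 ≤ 2 := by
  have hzeta := sum_le_hasSum (Finset.range (m + 1)) (fun i _ => by positivity) hasSum_zeta_two
  simp only [Finset.sum_range_succ', one_div] at hzeta
  simp only [inv_pow]
  push_cast at hzeta
  nlinarith [Real.pi_lt_d2, Real.pi_pos]

theorem NNReal.sq_sum_range_le_two_mul (u : ℕ → ℝ≥0) (m : ℕ) :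
    (∑ i ∈ Finset.range m, u i) ^ 2 ≤ 2 * ∑ i ∈ Finset.range m, ((i + 1) * u i) ^ 2 := by
  have hweights : ∑ i ∈ Finset.range m, ((i : ℝ≥0) + 1)⁻¹ ^ 2 ≤ 2 := by
    rw [← NNReal.coe_le_coe]
    push_cast
    exact sum_range_inv_succ_sq_le_two m
  calc (∑ i ∈ Finset.range m, u i) ^ 2
      = (∑ i ∈ Finset.range m, ((i : ℝ≥0) + 1)⁻¹ * ((i + 1) * u i)) ^ 2 := by
        congr 1
        refine Finset.sum_congr rfl fun i _ => ?_
        rw [inv_mul_cancel_left₀ (by positivity)]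
    _ ≤ (∑ i ∈ Finset.range m, ((i : ℝ≥0) + 1)⁻¹ ^ 2) * ∑ i ∈ Finset.range m, ((i + 1) * u i) ^ 2 :=
        Finset.sum_mul_sq_le_sq_mul_sq _ _ _
    _ ≤ 2 * ∑ i ∈ Finset.range m, ((i + 1) * u i) ^ 2 := by gcongr

variable {E : Type*} [SeminormedAddCommGroup E] {F : ℕ → ℕ → E} {n : ℕ}

/-- The last sum controls the remainder `F (2 ^ m) n`, `2 ^ m ≤ n < 2 ^ (m + 1)`, through the
Menchov–Rademacher inequality; the weights are chosen so that, for orthogonal increments, both sums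
integrate to `∑ (m + 1) ^ 2 ν (2 ^ m, 2 ^ (m + 1)]`. -/
noncomputable def menchovMajorant (F : ℕ → ℕ → E) : ℝ≥0∞ :=
  ‖F 0 1‖ₑ ^ 2 + 2 * ∑' i : ℕ, ((i + 1) * ‖F (2 ^ i) (2 ^ (i + 1))‖ₑ) ^ 2
    + ∑' m : ℕ, (m + 1) * dyadicSum (fun a b => ‖F a b‖ₑ ^ 2) m (2 ^ m)

theorem coe_dyadicSum_nnnorm_sq (F : ℕ → ℕ → E) (m c : ℕ) :
    ((dyadicSum (fun a b => ‖F a b‖₊ ^ 2) m c : ℝ≥0) : ℝ≥0∞)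
      = dyadicSum (fun a b => ‖F a b‖ₑ ^ 2) m c :=
  map_dyadicSum ENNReal.ofNNRealHom _ m c

theorem IsAdditiveUpTo.nnnorm_sq_remainder_le (hF : IsAdditiveUpTo F n) (hn : n ≠ 0) :
    ‖F (2 ^ Nat.log 2 n) n‖₊ ^ 2
      ≤ (Nat.log 2 n + 1)
        * dyadicSum (fun a b => ‖F a b‖₊ ^ 2) (Nat.log 2 n) (2 ^ Nat.log 2 n) := by
  have hm := Nat.pow_log_le_self 2 hn
  have hm' : n < 2 ^ Nat.log 2 n + 2 ^ Nat.log 2 n := by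
    simpa [pow_succ, mul_two] using Nat.lt_pow_succ_log_self one_lt_two n
  simpa [Nat.add_sub_cancel' hm] using
    hF.nnnorm_sq_le_mul_dyadicSum (m := Nat.log 2 n) (c := 2 ^ Nat.log 2 n)
      (j := n - 2 ^ Nat.log 2 n) (by omega) (by omega)

theorem IsAdditiveUpTo.nnnorm_sq_le (hF : IsAdditiveUpTo F n) (hn : n ≠ 0) :
    ‖F 0 n‖₊ ^ 2 ≤ 3 * (‖F 0 1‖₊ ^ 2
      + 2 * ∑ i ∈ Finset.range (Nat.log 2 n), ((i + 1) * ‖F (2 ^ i) (2 ^ (i + 1))‖₊) ^ 2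
      + (Nat.log 2 n + 1) * dyadicSum (fun a b => ‖F a b‖₊ ^ 2) (Nat.log 2 n) (2 ^ Nat.log 2 n)) :=
  calc ‖F 0 n‖₊ ^ 2
      ≤ (‖F 0 1‖₊ + ∑ i ∈ Finset.range (Nat.log 2 n), ‖F (2 ^ i) (2 ^ (i + 1))‖₊
          + ‖F (2 ^ Nat.log 2 n) n‖₊) ^ 2 := by
        rw [hF.eq_add_sum_add hn]
        gcongr
        refine (nnnorm_add_le _ _).trans (add_le_add ((nnnorm_add_le _ _).trans ?_) le_rfl)
        gcongr
        exact nnnorm_sum_le _ _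
    _ ≤ 3 * (‖F 0 1‖₊ ^ 2 + (∑ i ∈ Finset.range (Nat.log 2 n), ‖F (2 ^ i) (2 ^ (i + 1))‖₊) ^ 2
          + ‖F (2 ^ Nat.log 2 n) n‖₊ ^ 2) := NNReal.add_add_sq_le _ _ _
    _ ≤ _ := by
        gcongr
        · exact NNReal.sq_sum_range_le_two_mul _ _
        · exact hF.nnnorm_sq_remainder_le hn

theorem IsAdditiveUpTo.enorm_sq_le_menchovMajorant (hF : IsAdditiveUpTo F n) :
    ‖F 0 n‖ₑ ^ 2 ≤ 3 * menchovMajorant F := by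
  rcases eq_or_ne n 0 with rfl | hn
  · simp [hF.apply_self le_rfl, enorm_eq_nnnorm]
  have h := ENNReal.coe_le_coe.2 (hF.nnnorm_sq_le hn)
  push_cast at h
  rw [coe_dyadicSum_nnnorm_sq] at h
  simp only [← enorm_eq_nnnorm] at h
  refine h.trans ?_
  unfold menchovMajorant
  gcongr
  · exact ENNReal.sum_le_tsum _
  · exact ENNReal.le_tsum (f := fun m : ℕ => ((m : ℝ≥0∞) + 1)
      * dyadicSum (fun a b => ‖F a b‖ₑ ^ 2) m (2 ^ m)) _

theorem tendsto_zero_of_enorm_sq_le {α : Type*} {l : Filter α} {g : α → E} {t : α → ℝ≥0∞}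
    (hg : ∀ᶠ x in l, ‖g x‖ₑ ^ 2 ≤ t x) (ht : Tendsto t l (nhds 0)) : Tendsto g l (nhds 0) := by
  have ht' : Tendsto (fun x => t x ^ (2⁻¹ : ℝ)) l (nhds 0) := by
    have h := ((ENNReal.continuous_rpow_const (y := (2⁻¹ : ℝ))).tendsto 0).comp ht
    rwa [ENNReal.zero_rpow_of_pos (by norm_num)] at h
  rw [tendsto_iff_edist_tendsto_0]
  refine tendsto_of_tendsto_of_tendsto_of_le_of_le' tendsto_const_nhds ht'
    (Eventually.of_forall fun _ => bot_le) ?_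
  filter_upwards [hg] with x hx
  rw [edist_zero_right, ENNReal.le_rpow_inv_iff two_pos]
  simpa using hx

theorem summable_of_menchovMajorant_ne_top [CompleteSpace E] (hM : menchovMajorant F ≠ ∞) :
    Summable fun i => F (2 ^ i) (2 ^ (i + 1)) := by
  set B := ∑' i : ℕ, ((i + 1) * ‖F (2 ^ i) (2 ^ (i + 1))‖ₑ) ^ 2
  have hB : 2 * B ≠ ∞ := ne_top_of_le_ne_top hM (le_add_right le_add_self)
  refine .of_nnnorm <|
    NNReal.summable_of_sum_range_le (c := NNReal.sqrt (2 * B).toNNReal) fun m => ?_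
  rw [NNReal.le_sqrt_iff_sq_le]
  refine (NNReal.sq_sum_range_le_two_mul _ m).trans ?_
  rw [← ENNReal.coe_le_coe, ENNReal.coe_toNNReal hB]
  push_cast
  gcongr
  simp only [B, enorm_eq_nnnorm]
  exact ENNReal.sum_le_tsum _

theorem exists_tendsto_of_menchovMajorant_ne_top [CompleteSpace E] (hF : ∀ n, IsAdditiveUpTo F n)
    (hM : menchovMajorant F ≠ ∞) : ∃ l, Tendsto (fun n => F 0 n) atTop (nhds l) := by
  have hlog : Tendsto (Nat.log 2) atTop atTop :=
    tendsto_atTop_atTop.2 fun m => ⟨2 ^ m, fun n hn => Nat.le_log_of_pow_le one_lt_two hn⟩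
  have hremainder : Tendsto (fun n => F (2 ^ Nat.log 2 n) n) atTop (nhds 0) := by
    refine tendsto_zero_of_enorm_sq_le ?_
      ((ENNReal.tendsto_atTop_zero_of_tsum_ne_top (ne_top_of_le_ne_top hM le_add_self)).comp hlog)
    filter_upwards [eventually_ne_atTop 0] with n hn
    have h := ENNReal.coe_le_coe.2 ((hF n).nnnorm_sq_remainder_le hn)
    push_cast at h
    rw [coe_dyadicSum_nnnorm_sq] at h
    simpa only [Function.comp_apply, enorm_eq_nnnorm] using h
  have hdyadic := (summable_of_menchovMajorant_ne_top hM).hasSum.tendsto_sum_nat.comp hlog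
  refine ⟨F 0 1 + ∑' i, F (2 ^ i) (2 ^ (i + 1)) + 0,
    ((hdyadic.const_add _).add hremainder).congr' ?_⟩
  filter_upwards [eventually_ne_atTop 0] with n hn
  exact ((hF n).eq_add_sum_add hn).symm

end Majorant

section Integration

variable {K : Type*} [MeasurableSpace K] {σ : Measure K}

theorem aemeasurable_dyadicSum {e : K → ℕ → ℕ → ℝ≥0∞}
    (he : ∀ a b, AEMeasurable (fun k => e k a b) σ) (m c : ℕ) :
    AEMeasurable (fun k => dyadicSum (e k) m c) σ := by
  induction m generalizing c with
  | zero => exact he _ _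
  | succ m ih => exact ((ih c).add (ih _)).add (he _ _)

theorem lintegral_dyadicSum {e : K → ℕ → ℕ → ℝ≥0∞} {ν : Measure ℝ}
    (he : ∀ a b, AEMeasurable (fun k => e k a b) σ)
    (hν : ∀ a b : ℕ, ∫⁻ k, e k a b ∂σ = ν (Ioc a b)) (m c : ℕ) :
    ∫⁻ k, dyadicSum (e k) m c ∂σ = (m + 1) * ν (Ioc (c : ℝ) (c + 2 ^ m)) := by
  induction m generalizing c with
  | zero => simp [dyadicSum, hν]
  | succ m ih =>
    have hsplit : ν (Ioc (c : ℝ) (c + 2 ^ (m + 1)))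
        = ν (Ioc (c : ℝ) (c + 2 ^ m)) + ν (Ioc ((c : ℝ) + 2 ^ m) (c + 2 ^ m + 2 ^ m)) := by
      rw [← measure_union (Ioc_disjoint_Ioc_of_le le_rfl) measurableSet_Ioc,
        Ioc_union_Ioc_eq_Ioc (le_add_of_nonneg_right (by positivity))
          (le_add_of_nonneg_right (by positivity)), add_assoc, ← two_mul, ← pow_succ']
    simp only [dyadicSum]
    rw [lintegral_add_right' _ (he _ _), lintegral_add_right' _ (aemeasurable_dyadicSum he _ _),
      ih, ih, hν]
    push_cast
    rw [hsplit]
    ring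

variable {E : Type*} [SeminormedAddCommGroup E] {F : K → ℕ → ℕ → E}

theorem aemeasurable_menchovMajorant (hF : ∀ a b, AEMeasurable (fun k => ‖F k a b‖ₑ ^ 2) σ) :
    AEMeasurable (fun k => menchovMajorant (F k)) σ := by
  refine ((hF 0 1).add ((AEMeasurable.tsum fun i => ?_).const_mul _)).add
    (AEMeasurable.tsum fun m =>
      (aemeasurable_dyadicSum (e := fun k a b => ‖F k a b‖ₑ ^ 2) hF m _).const_mul _)
  simp only [mul_pow]
  exact (hF _ _).const_mul _

theorem lintegral_menchovMajorant {ν : Measure ℝ}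
    (hF : ∀ a b, AEMeasurable (fun k => ‖F k a b‖ₑ ^ 2) σ)
    (hν : ∀ a b : ℕ, ∫⁻ k, ‖F k a b‖ₑ ^ 2 ∂σ = ν (Ioc a b)) :
    ∫⁻ k, menchovMajorant (F k) ∂σ
      = ν (Ioc 0 1) + 3 * ∑' m : ℕ, ((m : ℝ≥0∞) + 1) ^ 2 * ν (Ioc (2 ^ m) (2 ^ (m + 1))) := by
  have hinitial : ∫⁻ k, ‖F k 0 1‖ₑ ^ 2 ∂σ = ν (Ioc 0 1) := by simpa using hν 0 1
  have hdyadic : ∫⁻ k, ∑' i : ℕ, ((i + 1) * ‖F k (2 ^ i) (2 ^ (i + 1))‖ₑ) ^ 2 ∂σ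
      = ∑' m : ℕ, ((m : ℝ≥0∞) + 1) ^ 2 * ν (Ioc (2 ^ m) (2 ^ (m + 1))) := by
    simp only [mul_pow]
    rw [lintegral_tsum fun i => (hF _ _).const_mul _]
    refine tsum_congr fun i => ?_
    rw [lintegral_const_mul' _ _ (by finiteness), hν]
    push_cast
    rfl
  have hremainder : ∫⁻ k, ∑' m : ℕ, (m + 1) * dyadicSum (fun a b => ‖F k a b‖ₑ ^ 2) m (2 ^ m) ∂σ
      = ∑' m : ℕ, ((m : ℝ≥0∞) + 1) ^ 2 * ν (Ioc (2 ^ m) (2 ^ (m + 1))) := by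
    rw [lintegral_tsum fun m =>
      (aemeasurable_dyadicSum (e := fun k a b => ‖F k a b‖ₑ ^ 2) hF m _).const_mul _]
    refine tsum_congr fun m => ?_
    rw [lintegral_const_mul' _ _ (by finiteness),
      lintegral_dyadicSum (e := fun k a b => ‖F k a b‖ₑ ^ 2) hF hν]
    push_cast
    rw [← two_mul, ← pow_succ', sq, mul_assoc]
  unfold menchovMajorant
  rw [lintegral_add_right' _ (AEMeasurable.tsum fun m =>
      (aemeasurable_dyadicSum (e := fun k a b => ‖F k a b‖ₑ ^ 2) hF m _).const_mul _),
    lintegral_add_left' (hF 0 1), lintegral_const_mul' _ _ (by finiteness), hinitial, hdyadic,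
    hremainder]
  ring

end Integration

section LogarithmicWeight

theorem succ_sq_le_ofReal_log_sq {m : ℕ} {r : ℝ} (hr : 0 ≤ r) (hm : 2 ^ m ≤ 1 + r) :
    ((m : ℝ≥0∞) + 1) ^ 2 ≤ ENNReal.ofReal ((2 * Real.log (2 + r) / Real.log 2) ^ 2) := by
  have hlog : (m + 1) * Real.log 2 ≤ 2 * Real.log (2 + r) :=
    calc (m + 1) * Real.log 2 = Real.log (2 ^ (m + 1)) := by rw [Real.log_pow]; push_cast; ring
      _ ≤ Real.log ((2 + r) ^ 2) := Real.log_le_log (by positivity) (by rw [pow_succ]; nlinarith)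
      _ = 2 * Real.log (2 + r) := by rw [Real.log_pow]; norm_num
  have hsucc : (m : ℝ) + 1 ≤ 2 * Real.log (2 + r) / Real.log 2 := by
    rwa [le_div_iff₀ (Real.log_pos one_lt_two)]
  rw [← ENNReal.ofReal_natCast, ← ENNReal.ofReal_one,
    ← ENNReal.ofReal_add (by positivity) zero_le_one, ← ENNReal.ofReal_pow (by positivity)]
  exact ENNReal.ofReal_le_ofReal (pow_le_pow_left₀ (by positivity) hsucc 2)

theorem measure_Ioc_zero_one_add_tsum_le_lintegral_log_sq (ν : Measure ℝ) :
    ν (Ioc 0 1) + ∑' m : ℕ, ((m : ℝ≥0∞) + 1) ^ 2 * ν (Ioc (2 ^ m) (2 ^ (m + 1)))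
      ≤ ∫⁻ r in Ioi 0, ENNReal.ofReal ((2 * Real.log (2 + r) / Real.log 2) ^ 2) ∂ν := by
  set w : ℝ → ℝ≥0∞ := fun r => ENNReal.ofReal ((2 * Real.log (2 + r) / Real.log 2) ^ 2)
  have hdisjoint : Pairwise (Disjoint on fun m : ℕ => Ioc ((2 : ℝ) ^ m) (2 ^ (m + 1))) := by
    simpa [Order.succ_eq_add_one] using (pow_right_mono₀ one_le_two).pairwise_disjoint_on_Ioc_succ
  have hunion : (⋃ m : ℕ, Ioc ((2 : ℝ) ^ m) (2 ^ (m + 1))) ⊆ Ioi 1 :=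
    iUnion_subset fun m r hr => (one_le_pow₀ one_le_two).trans_lt hr.1
  calc _ ≤ ∫⁻ r in Ioc 0 1, w r ∂ν + ∑' m : ℕ, ∫⁻ r in Ioc (2 ^ m) (2 ^ (m + 1)), w r ∂ν := by
        gcongr with m
        · rw [← setLIntegral_one]
          refine setLIntegral_mono' measurableSet_Ioc fun r hr => ?_
          exact (le_of_eq (by norm_num)).trans
            (succ_sq_le_ofReal_log_sq (m := 0) hr.1.le (by simp [hr.1.le]))
        · rw [← setLIntegral_const]
          refine setLIntegral_mono' measurableSet_Ioc fun r hr => ?_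
          refine succ_sq_le_ofReal_log_sq ((pow_pos two_pos m).trans hr.1).le ?_
          linarith [hr.1]
    _ = ∫⁻ r in Ioc 0 1, w r ∂ν + ∫⁻ r in ⋃ m : ℕ, Ioc ((2 : ℝ) ^ m) (2 ^ (m + 1)), w r ∂ν := by
        rw [lintegral_iUnion (fun _ => measurableSet_Ioc) hdisjoint]
    _ ≤ ∫⁻ r in Ioc 0 1, w r ∂ν + ∫⁻ r in Ioi 1, w r ∂ν := by gcongr
    _ = ∫⁻ r in Ioi 0, w r ∂ν := by
        rw [← lintegral_union measurableSet_Ioi (Ioc_disjoint_Ioi le_rfl),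
          Ioc_union_Ioi_eq_Ioi zero_le_one]

end LogarithmicWeight

theorem integral_iSup_sq_le {K E : Type*} [MeasurableSpace K] [SeminormedAddCommGroup E]
    {σ : Measure K} {S : ℕ → K → E} {G : K → ℝ≥0∞} {B : ℝ} (hS : ∀ k n, ‖S n k‖ₑ ^ 2 ≤ G k)
    (hG : ∫⁻ k, G k ∂σ ≤ ENNReal.ofReal B) (hB : 0 ≤ B) :
    ∫ k, (⨆ n, ‖S n k‖) ^ 2 ∂σ ≤ B := by
  have hpointwise : ∀ k, ENNReal.ofReal ((⨆ n, ‖S n k‖) ^ 2) ≤ G k := by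
    intro k
    rcases eq_or_ne (G k) ∞ with hk | hk
    · simp [hk]
    have hsq : ∀ n, ‖S n k‖ ^ 2 ≤ (G k).toReal := fun n => by
      simpa only [ENNReal.toReal_pow, toReal_enorm] using ENNReal.toReal_mono hk (hS k n)
    have hsup : ⨆ n, ‖S n k‖ ≤ √(G k).toReal := Real.iSup_le
      (fun n => (Real.le_sqrt (norm_nonneg _) ENNReal.toReal_nonneg).2 (hsq n)) (Real.sqrt_nonneg _)
    rw [← ENNReal.ofReal_toReal hk]
    exact ENNReal.ofReal_le_ofReal ((Real.le_sqrt (Real.iSup_nonneg fun n => norm_nonneg _)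
      ENNReal.toReal_nonneg).1 hsup)
  rw [← ENNReal.ofReal_le_ofReal_iff hB,
    ← Real.enorm_eq_ofReal (integral_nonneg fun k => sq_nonneg _)]
  calc ‖∫ k, (⨆ n, ‖S n k‖) ^ 2 ∂σ‖ₑ ≤ ∫⁻ k, ‖(⨆ n, ‖S n k‖) ^ 2‖ₑ ∂σ :=
        enorm_integral_le_lintegral_enorm _
    _ ≤ ∫⁻ k, G k ∂σ := lintegral_mono fun k => by
        rw [Real.enorm_eq_ofReal (sq_nonneg _)]; exact hpointwise k
    _ ≤ ENNReal.ofReal B := hG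

section ContinuousOrthonormalSystem

variable {K : Type*} {P : ℝ → K → ℂ} {f : ℝ → ℂ}

noncomputable def partialIntegral (f : ℝ → ℂ) (P : ℝ → K → ℂ) (k : K) (a b : ℕ) : ℂ :=
  ∫ r in Ioc (a : ℝ) b, f r * P r k

theorem isAdditiveUpTo_partialIntegral {k : K} {n : ℕ}
    (h : IntegrableOn (fun r => f r * P r k) (Ioc 0 n)) :
    IsAdditiveUpTo (partialIntegral f P k) n := by
  intro a b c hab hbc hcn
  have hab' : (a : ℝ) ≤ b := by exact_mod_cast hab
  have hbc' : (b : ℝ) ≤ c := by exact_mod_cast hbc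
  have hac : IntegrableOn (fun r => f r * P r k) (Ioc (a : ℝ) c) :=
    h.mono_set (Ioc_subset_Ioc (Nat.cast_nonneg a) (by exact_mod_cast hcn))
  rw [partialIntegral, ← Ioc_union_Ioc_eq_Ioc hab' hbc',
    setIntegral_union (Ioc_disjoint_Ioc_of_le le_rfl) measurableSet_Ioc
      (hac.mono_set (Ioc_subset_Ioc_right hbc')) (hac.mono_set (Ioc_subset_Ioc_left hab'))]
  rfl

theorem enorm_sq_partialIntegral_le_menchovMajorant (k : K) (n : ℕ) :
    ‖partialIntegral f P k 0 n‖ₑ ^ 2 ≤ 3 * menchovMajorant (partialIntegral f P k) := by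
  by_cases h : IntegrableOn (fun r => f r * P r k) (Ioc 0 n)
  · exact (isAdditiveUpTo_partialIntegral h).enorm_sq_le_menchovMajorant
  · simp [partialIntegral, integral_undef h]

theorem exists_tendsto_partialIntegral {k : K}
    (hk : menchovMajorant (partialIntegral f P k) ≠ ∞) :
    ∃ l, Tendsto (fun n => partialIntegral f P k 0 n) atTop (nhds l) := by
  by_cases h : ∀ n : ℕ, IntegrableOn (fun r => f r * P r k) (Ioc 0 n)
  · exact exists_tendsto_of_menchovMajorant_ne_top
      (fun n => isAdditiveUpTo_partialIntegral (h n)) hk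
  obtain ⟨n₀, hn₀⟩ := not_forall.1 h
  refine ⟨0, tendsto_atTop_of_eventually_const (i₀ := n₀) fun n hn => integral_undef fun hint => ?_⟩
  exact hn₀ (IntegrableOn.mono_set hint (Ioc_subset_Ioc (by simp) (by exact_mod_cast hn)))

variable [MeasurableSpace K] {σ : Measure K}

def HasIntervalParseval (σ : Measure K) (P : ℝ → K → ℂ) : Prop :=
  ∀ g : ℝ → ℂ, MemLp g 2 (volume.restrict (Ioi 0)) → ∀ a : ℝ, 0 < a →
    ∫ k, ‖∫ r in Ioc 0 a, g r * P r k‖ ^ 2 ∂σ = ∫ r in Ioc 0 a, ‖g r‖ ^ 2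

theorem integrableOn_norm_sq_of_memLp (hf : MemLp f 2 (volume.restrict (Ioi 0))) {a b : ℝ}
    (ha : 0 ≤ a) : IntegrableOn (fun r => ‖f r‖ ^ 2) (Ioc a b) :=
  IntegrableOn.mono_set (hf.integrable_norm_pow two_ne_zero) fun _ hr => ha.trans_lt hr.1

theorem integral_norm_sq_partialIntegral (hP : HasIntervalParseval σ P)
    (hf : MemLp f 2 (volume.restrict (Ioi 0))) (a b : ℕ) :
    ∫ k, ‖partialIntegral f P k a b‖ ^ 2 ∂σ = ∫ r in Ioc (a : ℝ) b, ‖f r‖ ^ 2 := by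
  rcases le_or_gt b a with hba | hab
  · simp [partialIntegral, Ioc_eq_empty_of_le (by exact_mod_cast hba : (b : ℝ) ≤ a)]
  have hsub : Ioc (a : ℝ) b ⊆ Ioc 0 b := Ioc_subset_Ioc_left (Nat.cast_nonneg a)
  have hsq : (fun r => ‖(Ioc (a : ℝ) b).indicator f r‖ ^ 2)
      = (Ioc (a : ℝ) b).indicator fun r => ‖f r‖ ^ 2 := by
    ext r
    by_cases hr : r ∈ Ioc (a : ℝ) b <;> simp [hr]
  have hmul : ∀ k, (fun r => (Ioc (a : ℝ) b).indicator f r * P r k)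
      = (Ioc (a : ℝ) b).indicator fun r => f r * P r k :=
    fun k => funext fun r => (indicator_mul_left _ f (P · k)).symm
  have h := hP _ (hf.indicator (s := Ioc (a : ℝ) b) measurableSet_Ioc) b
    (by exact_mod_cast (Nat.zero_le a).trans_lt hab)
  simp only [hmul, hsq, setIntegral_indicator measurableSet_Ioc, inter_eq_right.2 hsub] at h
  exact h

theorem integrable_norm_sq_partialIntegral (hP : HasIntervalParseval σ P)
    (hf : MemLp f 2 (volume.restrict (Ioi 0))) (a b : ℕ) :
    Integrable (fun k => ‖partialIntegral f P k a b‖ ^ 2) σ := by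
  by_contra hnot
  have hzero : ∫ r in Ioc (a : ℝ) b, ‖f r‖ ^ 2 = 0 := by
    rw [← integral_norm_sq_partialIntegral hP hf, integral_undef hnot]
  have hf0 : (fun r => ‖f r‖ ^ 2) =ᵐ[volume.restrict (Ioc (a : ℝ) b)] 0 :=
    (integral_eq_zero_iff_of_nonneg (fun _ => sq_nonneg _)
      (integrableOn_norm_sq_of_memLp hf (Nat.cast_nonneg a))).1 hzero
  have hD : ∀ k, partialIntegral f P k a b = 0 := fun k => integral_eq_zero_of_ae <| by
    filter_upwards [hf0] with r hr
    simp_all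
  exact hnot (by simp [hD])

theorem aemeasurable_enorm_sq_partialIntegral (hP : HasIntervalParseval σ P)
    (hf : MemLp f 2 (volume.restrict (Ioi 0))) (a b : ℕ) :
    AEMeasurable (fun k => ‖partialIntegral f P k a b‖ₑ ^ 2) σ :=
  (integrable_norm_sq_partialIntegral hP hf a b).aemeasurable.ennreal_ofReal.congr <|
    ae_of_all _ fun k => by simp only [ENNReal.ofReal_pow (norm_nonneg _), ofReal_norm]

theorem lintegral_enorm_sq_partialIntegral (hP : HasIntervalParseval σ P)
    (hf : MemLp f 2 (volume.restrict (Ioi 0))) (a b : ℕ) :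
    ∫⁻ k, ‖partialIntegral f P k a b‖ₑ ^ 2 ∂σ = ∫⁻ r in Ioc (a : ℝ) b, ‖f r‖ₑ ^ 2 := by
  have hleft := ofReal_integral_eq_lintegral_ofReal (integrable_norm_sq_partialIntegral hP hf a b)
    (ae_of_all _ fun _ => sq_nonneg _)
  have hright := ofReal_integral_eq_lintegral_ofReal
    (integrableOn_norm_sq_of_memLp hf (b := b) (Nat.cast_nonneg a))
    (ae_of_all _ fun _ => sq_nonneg _)
  rw [integral_norm_sq_partialIntegral hP hf, hright] at hleft
  simpa only [ENNReal.ofReal_pow (norm_nonneg _), ofReal_norm] using hleft.symm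

theorem lintegral_menchovMajorant_partialIntegral_le (hP : HasIntervalParseval σ P)
    (hf : MemLp f 2 (volume.restrict (Ioi 0)))
    (hL : Integrable (fun r => ‖f r‖ ^ 2 * Real.log (2 + r) ^ 2) (volume.restrict (Ioi 0))) :
    ∫⁻ k, menchovMajorant (partialIntegral f P k) ∂σ
      ≤ 3 * ENNReal.ofReal ((2 / Real.log 2) ^ 2
          * ∫ r in Ioi 0, ‖f r‖ ^ 2 * Real.log (2 + r) ^ 2) := by
  set ν := volume.withDensity fun r => ‖f r‖ₑ ^ 2
  have hν : ∀ a b : ℕ, ∫⁻ k, ‖partialIntegral f P k a b‖ₑ ^ 2 ∂σ = ν (Ioc a b) := fun a b => by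
    rw [withDensity_apply _ measurableSet_Ioc, lintegral_enorm_sq_partialIntegral hP hf]
  have hweight : ∫⁻ r in Ioi 0, ENNReal.ofReal ((2 * Real.log (2 + r) / Real.log 2) ^ 2) ∂ν
      = ENNReal.ofReal ((2 / Real.log 2) ^ 2 * ∫ r in Ioi 0, ‖f r‖ ^ 2 * Real.log (2 + r) ^ 2) := by
    rw [setLIntegral_withDensity_eq_setLIntegral_mul_non_measurable₀ _
        (hf.aestronglyMeasurable.enorm.pow_const 2) _ measurableSet_Ioi
        (ae_of_all _ fun _ => by finiteness),
      ← integral_const_mul, ofReal_integral_eq_lintegral_ofReal (hL.const_mul _)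
        (ae_of_all _ fun _ => by positivity)]
    refine lintegral_congr fun r => ?_
    simp only [Pi.mul_apply, ← ofReal_norm, ← ENNReal.ofReal_pow (norm_nonneg _),
      ← ENNReal.ofReal_mul (sq_nonneg _)]
    congr 1
    ring
  rw [lintegral_menchovMajorant (aemeasurable_enorm_sq_partialIntegral hP hf) hν, ← hweight]
  calc _ ≤ 3 * (ν (Ioc 0 1) + ∑' m : ℕ, ((m : ℝ≥0∞) + 1) ^ 2 * ν (Ioc (2 ^ m) (2 ^ (m + 1)))) := by
        rw [mul_add]
        gcongr
        exact le_mul_of_one_le_left bot_le (by norm_num)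
    _ ≤ _ := by gcongr; exact measure_Ioc_zero_one_add_tsum_le_lintegral_log_sq ν

end ContinuousOrthonormalSystem

/-- Menchov–Rademacher theorem for continuous orthonormal systems. -/
theorem menchov_rademacher_continuous :
    ∃ C : ℝ, 0 < C ∧
    ∀ (σ : Measure ℝ) (P : ℝ → ℝ → ℂ) (f : ℝ → ℂ),
      (∀ᵐ k ∂σ, ∀ a : ℝ, 0 < a → IntegrableOn (fun r => ‖P r k‖ ^ 2) (Set.Ioc 0 a)) →
      (∀ g : ℝ → ℂ, MemLp g 2 (volume.restrict (Set.Ioi (0:ℝ))) → ∀ a : ℝ, 0 < a →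
        ∫ k, ‖∫ r in Set.Ioc (0:ℝ) a, g r * P r k‖ ^ 2 ∂σ
          = ∫ r in Set.Ioc (0:ℝ) a, ‖g r‖ ^ 2) →
      MemLp f 2 (volume.restrict (Set.Ioi (0:ℝ))) →
      Integrable (fun r => ‖f r‖ ^ 2 * (Real.log (2 + r)) ^ 2)
        (volume.restrict (Set.Ioi (0:ℝ))) →
      ((∀ᵐ k ∂σ, ∃ l : ℂ,
          Tendsto (fun n : ℕ => ∫ r in Set.Ioc (0:ℝ) (n:ℝ), f r * P r k) atTop (nhds l)) ∧
        ∫ k, (⨆ n : ℕ, ‖∫ r in Set.Ioc (0:ℝ) (n:ℝ), f r * P r k‖) ^ 2 ∂σ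
          ≤ C ^ 2 * ∫ r in Set.Ioi (0:ℝ), ‖f r‖ ^ 2 * (Real.log (2 + r)) ^ 2) := by
  refine ⟨6 / Real.log 2, by positivity, fun σ P f _ hP hf hL => ?_⟩
  have hM := lintegral_menchovMajorant_partialIntegral_le hP hf hL
  have hS : ∀ k (n : ℕ), ∫ r in Ioc (0 : ℝ) n, f r * P r k = partialIntegral f P k 0 n :=
    fun k n => by simp [partialIntegral]
  simp only [hS]
  constructor
  · have hfinite : ∀ᵐ k ∂σ, menchovMajorant (partialIntegral f P k) < ∞ :=
      ae_lt_top' (aemeasurable_menchovMajorant (aemeasurable_enorm_sq_partialIntegral hP hf))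
        (ne_top_of_le_ne_top (by finiteness) hM)
    filter_upwards [hfinite] with k hk
    exact exists_tendsto_partialIntegral hk.ne
  · refine integral_iSup_sq_le (fun k n => enorm_sq_partialIntegral_le_menchovMajorant k n) ?_
      (by positivity)
    rw [lintegral_const_mul' _ _ (by finiteness)]
    calc _ ≤ 3 * (3 * ENNReal.ofReal ((2 / Real.log 2) ^ 2
          * ∫ r in Ioi 0, ‖f r‖ ^ 2 * Real.log (2 + r) ^ 2)) := by gcongr
      _ = _ := by
        rw [← mul_assoc, ← ENNReal.ofReal_ofNat, ← ENNReal.ofReal_mul (by norm_num),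
          ← ENNReal.ofReal_mul (by norm_num)]
        congr 1
        ring
end

section
/- Let ε ∈ (0,1), ν > 0, a > 0 with aε ≤ ν. Suppose g : ℝ → ℂ is smooth (C^∞) with g(0) = 0. Then |∫₀^a e^{iu²} g(uε) du| ≤ C ε, where the constant C depends only on g and ν (and is independent of a and ε). -/
open MeasureTheory Complex intervalIntegral Metric

/-- Parametric differentiation under the integral sign. -/
lemma param_hasDerivAt (f : ℝ → ℂ) (hf : ContDiff ℝ (⊤ : ℕ∞) f) (w : ℝ → ℝ) (hw : Continuous w)
    (hw1 : ∀ s ∈ Set.uIoc (0:ℝ) 1, |w s| ≤ 1) (t : ℝ) :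
    HasDerivAt (fun x => ∫ s in (0:ℝ)..1, w s • deriv f (s * x))
      (∫ s in (0:ℝ)..1, (w s * s) • deriv (deriv f) (s * t)) t := by
  have hf' : ContDiff ℝ (⊤ : ℕ∞) (deriv f) := (contDiff_infty_iff_deriv.mp hf).2
  have hcf' : Continuous (deriv f) := hf'.continuous
  have hcf'' : Continuous (deriv (deriv f)) := (contDiff_infty_iff_deriv.mp hf').2.continuous
  obtain ⟨C, hC⟩ : ∃ C, ∀ x ∈ Set.Icc (-(|t|+1)) (|t|+1), ‖deriv (deriv f) x‖ ≤ C :=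
    isCompact_Icc.exists_bound_of_continuousOn hcf''.continuousOn
  refine (intervalIntegral.hasDerivAt_integral_of_dominated_loc_of_deriv_le
      (F := fun x s => w s • deriv f (s * x))
      (F' := fun x s => (w s * s) • deriv (deriv f) (s * x)) (bound := fun _ => C)
      (ball_mem_nhds t one_pos) ?_ ?_ ?_ ?_ ?_ ?_).2
  · filter_upwards with x
    exact ((hw.smul (hcf'.comp (continuous_id.mul continuous_const)))).aestronglyMeasurable
  · exact ((hw.smul (hcf'.comp (continuous_id.mul continuous_const)))).intervalIntegrable _ _
  · exact (((hw.mul continuous_id).smul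
      (hcf''.comp (continuous_id.mul continuous_const)))).aestronglyMeasurable
  · filter_upwards with s hs x hx
    have hs' : |s| ≤ 1 := by
      rw [Set.uIoc_of_le zero_le_one] at hs
      rw [abs_of_pos hs.1]; exact hs.2
    have hsx : s * x ∈ Set.Icc (-(|t|+1)) (|t|+1) := by
      have : |s * x| ≤ |t| + 1 := by
        rw [abs_mul]
        calc |s| * |x| ≤ 1 * |x| := by
              exact mul_le_mul_of_nonneg_right hs' (abs_nonneg _)
          _ = |x| := one_mul _
          _ ≤ |t| + 1 := by
              have := mem_ball_iff_norm.mp hx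
              have : |x - t| < 1 := this
              have := abs_sub_abs_le_abs_sub x t
              linarith
      exact abs_le.mp this |>.imp (fun h => h) (fun h => h) |> fun h => ⟨h.1, h.2⟩
    calc ‖(w s * s) • deriv (deriv f) (s * x)‖ = |w s * s| * ‖deriv (deriv f) (s * x)‖ := by
          rw [norm_smul, Real.norm_eq_abs]
      _ ≤ 1 * C := by
          have hC0 : 0 ≤ C :=
            le_trans (norm_nonneg _) (hC _ hsx)
          refine mul_le_mul ?_ le_rfl (norm_nonneg _) zero_le_one |>.trans ?_
          · rw [abs_mul]
            exact mul_le_one₀ (hw1 s hs) (abs_nonneg s) hs'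
          · exact mul_le_mul_of_nonneg_left (hC _ hsx) zero_le_one
      _ = C := one_mul C
  · exact intervalIntegrable_const
  · filter_upwards with s hs x hx
    have h1 : HasDerivAt (fun x : ℝ => s * x) s x := by
      simpa using (hasDerivAt_id x).const_mul s
    have h2 : HasDerivAt (deriv f) (deriv (deriv f) (s * x)) (s * x) :=
      (hf'.differentiable (by simp) (s * x)).hasDerivAt
    have := HasDerivAt.scomp x h2 h1
    have := this.const_smul (w s)
    simpa [Function.comp_def, Pi.smul_def, smul_smul, mul_comm, mul_assoc, mul_left_comm] using this

noncomputable def hFun (g : ℝ → ℂ) (t : ℝ) : ℂ := ∫ s in (0:ℝ)..1, deriv g (s * t)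

noncomputable def HFun (g : ℝ → ℂ) (t : ℝ) : ℂ :=
  ∫ s in (0:ℝ)..1, ((s:ℝ):ℂ) * deriv (deriv g) (s * t)

lemma hFun_hasDerivAt (g : ℝ → ℂ) (hg : ContDiff ℝ (⊤ : ℕ∞) g) (t : ℝ) :
    HasDerivAt (hFun g) (HFun g t) t := by
  have := param_hasDerivAt g hg (fun _ => 1) continuous_const (by intro s _; simp) t
  unfold hFun HFun
  simpa [hFun, HFun, Complex.real_smul] using this

lemma HFun_hasDerivAt (g : ℝ → ℂ) (hg : ContDiff ℝ (⊤ : ℕ∞) g) (t : ℝ) :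
    HasDerivAt (HFun g)
      (∫ s in (0:ℝ)..1, ((s:ℝ):ℂ) * ((s:ℝ):ℂ) * deriv (deriv (deriv g)) (s * t)) t := by
  have hg' : ContDiff ℝ (⊤ : ℕ∞) (deriv g) := (contDiff_infty_iff_deriv.mp hg).2
  have := param_hasDerivAt (deriv g) hg' (fun s => (1:ℝ) * s) (continuous_const.mul continuous_id)
    (by
      intro s hs
      rw [Set.uIoc_of_le zero_le_one] at hs
      rw [abs_mul, abs_one, one_mul, abs_of_pos hs.1]
      exact hs.2) t
  unfold HFun
  simpa [HFun, Complex.real_smul, mul_assoc] using this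

lemma hFun_spec (g : ℝ → ℂ) (hg : ContDiff ℝ (⊤ : ℕ∞) g) (hg0 : g 0 = 0) (t : ℝ) :
    ((t : ℝ) : ℂ) * hFun g t = g t := by
  have key : ∀ s ∈ Set.uIcc (0:ℝ) 1, HasDerivAt (fun s : ℝ => g (s * t))
      ((t : ℝ) • deriv g (s * t)) s := by
    intro s _
    have h1 : HasDerivAt (fun s : ℝ => s * t) t s := by
      simpa using (hasDerivAt_id s).mul_const t
    have h2 : HasDerivAt g (deriv g (s * t)) (s * t) :=
      (hg.differentiable (by simp) (s * t)).hasDerivAt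
    exact HasDerivAt.scomp s h2 h1
  have hint : IntervalIntegrable (fun s : ℝ => (t : ℝ) • deriv g (s * t)) volume 0 1 := by
    exact (Continuous.intervalIntegrable (by
      exact (continuous_const : Continuous fun _ : ℝ => (t:ℝ)).smul (((hg.continuous_deriv (mod_cast le_top)).comp
        (continuous_id.mul continuous_const) : Continuous fun s : ℝ => deriv g (s * t)))) _ _)
  have := intervalIntegral.integral_eq_sub_of_hasDerivAt key hint
  rw [intervalIntegral.integral_smul] at this
  simp only [one_mul, zero_mul, hg0, sub_zero] at this
  rw [← this]
  simp only [hFun, Complex.real_smul]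

/-- Oscillatory integral estimate: if `g` is smooth and vanishes at `0`, then
`|∫₀^a e^{iu²} g(uε) du| ≤ C ε` uniformly for `aε ≤ ν`. -/
theorem oscillatory_estimate (g : ℝ → ℂ) (ν : ℝ)
    (hg : ContDiff ℝ (⊤ : ℕ∞) g) (hg0 : g 0 = 0) (hν : 0 < ν) :
    ∃ C : ℝ, ∀ ε a : ℝ, 0 < ε → ε < 1 → 0 < a → a * ε ≤ ν →
      ‖∫ u in (0:ℝ)..a, Complex.exp (I * (u:ℂ) ^ 2) * g (u * ε)‖ ≤ C * ε := by
  have hg' : ContDiff ℝ (⊤ : ℕ∞) g := hg.of_le (by simp)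
  have hgd : ContDiff ℝ (⊤ : ℕ∞) (deriv g) := (contDiff_infty_iff_deriv.mp hg').2
  -- bounds for deriv g and deriv (deriv g) on [0, ν]
  obtain ⟨C1, hC1⟩ : ∃ C, ∀ x ∈ Set.Icc (0:ℝ) ν, ‖deriv g x‖ ≤ C :=
    isCompact_Icc.exists_bound_of_continuousOn hgd.continuous.continuousOn
  obtain ⟨C2, hC2⟩ : ∃ C, ∀ x ∈ Set.Icc (0:ℝ) ν, ‖deriv (deriv g) x‖ ≤ C :=
    isCompact_Icc.exists_bound_of_continuousOn
      ((contDiff_infty_iff_deriv.mp hgd).2).continuous.continuousOn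
  have hC1_0 : 0 ≤ C1 := le_trans (norm_nonneg _) (hC1 0 ⟨le_rfl, hν.le⟩)
  have hC2_0 : 0 ≤ C2 := le_trans (norm_nonneg _) (hC2 0 ⟨le_rfl, hν.le⟩)
  -- bounds for hFun and HFun on [0, ν]
  have hbound : ∀ t ∈ Set.Icc (0:ℝ) ν, ‖hFun g t‖ ≤ C1 := by
    intro t ht
    have := intervalIntegral.norm_integral_le_of_norm_le_const
      (C := C1) (f := fun s : ℝ => deriv g (s * t)) (a := (0:ℝ)) (b := 1) ?_
    · simpa [hFun] using this
    · intro s hs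
      rw [Set.uIoc_of_le zero_le_one] at hs
      refine hC1 _ ⟨mul_nonneg hs.1.le ht.1, ?_⟩
      calc s * t ≤ 1 * t := mul_le_mul_of_nonneg_right hs.2 ht.1
        _ = t := one_mul t
        _ ≤ ν := ht.2
  have hBound : ∀ t ∈ Set.Icc (0:ℝ) ν, ‖HFun g t‖ ≤ C2 := by
    intro t ht
    have := intervalIntegral.norm_integral_le_of_norm_le_const
      (C := C2) (f := fun s : ℝ => ((s:ℝ):ℂ) * deriv (deriv g) (s * t)) (a := (0:ℝ)) (b := 1) ?_
    · simpa [HFun, Complex.real_smul, mul_assoc] using this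
    · intro s hs
      rw [Set.uIoc_of_le zero_le_one] at hs
      rw [norm_mul, Complex.norm_real, Real.norm_eq_abs, abs_of_pos hs.1]
      have h1 : ‖deriv (deriv g) (s * t)‖ ≤ C2 := by
        refine hC2 _ ⟨mul_nonneg hs.1.le ht.1, ?_⟩
        calc s * t ≤ 1 * t := mul_le_mul_of_nonneg_right hs.2 ht.1
          _ = t := one_mul t
          _ ≤ ν := ht.2
      calc s * ‖deriv (deriv g) (s * t)‖ ≤ 1 * C2 :=
            mul_le_mul hs.2 h1 (norm_nonneg _) zero_le_one
        _ = C2 := one_mul C2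
  have hhc : Continuous (hFun g) := by
    rw [continuous_iff_continuousAt]
    exact fun t => (hFun_hasDerivAt g hg' t).continuousAt
  have hHc : Continuous (HFun g) := by
    rw [continuous_iff_continuousAt]
    exact fun t => (HFun_hasDerivAt g hg' t).continuousAt
  refine ⟨C1 + ν * C2 / 2, ?_⟩
  intro ε a hε hε1 ha hεa
  have hce : Continuous (fun u : ℝ => Complex.exp (I * (u:ℂ) ^ 2)) :=
    Complex.continuous_exp.comp (continuous_const.mul (Complex.continuous_ofReal.pow 2))
  set φ : ℝ → ℂ := fun u => Complex.exp (I * (u:ℂ) ^ 2) * hFun g (u * ε) with hφdef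
  set φ' : ℝ → ℂ := fun u =>
    Complex.exp (I * (u:ℂ) ^ 2) * (I * (2 * (u:ℂ))) * hFun g (u * ε)
      + Complex.exp (I * (u:ℂ) ^ 2) * ((ε : ℂ) * HFun g (u * ε)) with hφ'def
  have hφ : ∀ u : ℝ, HasDerivAt φ (φ' u) u := by
    intro u
    have h1 : HasDerivAt (fun u : ℝ => Complex.exp (I * (u:ℂ)^2))
        (Complex.exp (I * (u:ℂ)^2) * (I * (2 * (u:ℂ)))) u := by
      have hu : HasDerivAt (fun u : ℝ => ((u:ℝ):ℂ)) 1 u := Complex.ofRealCLM.hasDerivAt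
      have hp : HasDerivAt (fun u : ℝ => ((u:ℝ):ℂ)^2) (2 * (u:ℂ)) u := by
        have := hu.mul hu
        simpa [pow_two, two_mul, Pi.mul_def] using this
      have := (hp.const_mul I).cexp
      simpa using this
    have h2 : HasDerivAt (fun u : ℝ => hFun g (u * ε)) ((ε:ℂ) * HFun g (u * ε)) u := by
      have hi : HasDerivAt (fun u : ℝ => u * ε) ε u := by
        simpa using (hasDerivAt_id u).mul_const ε
      have := HasDerivAt.scomp u (hFun_hasDerivAt g hg' (u * ε)) hi
      simpa [Complex.real_smul, Function.comp_def] using this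
    simpa [hφ'def, Pi.mul_def] using h1.mul h2
  have hφ'cont : Continuous φ' := by
    apply Continuous.add
    · exact (hce.mul (continuous_const.mul (continuous_const.mul
        Complex.continuous_ofReal))).mul
        (hhc.comp (continuous_id.mul continuous_const))
    · exact hce.mul
        (continuous_const.mul (hHc.comp (continuous_id.mul continuous_const)))
  have hFTC : ∫ u in (0:ℝ)..a, φ' u = φ a - φ 0 :=
    intervalIntegral.integral_eq_sub_of_hasDerivAt (fun u _ => hφ u)
      (hφ'cont.intervalIntegrable _ _)
  -- pointwise identity
  have hpt : ∀ u : ℝ, Complex.exp (I * (u:ℂ)^2) * g (u * ε)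
      = ((ε:ℂ) / (2 * I)) * φ' u
        - ((ε:ℂ)^2 / (2 * I)) * (Complex.exp (I * (u:ℂ)^2) * HFun g (u * ε)) := by
    intro u
    rw [← hFun_spec g hg' hg0 (u * ε)]
    simp only [hφ'def]
    push_cast
    have hI : (2 : ℂ) * I ≠ 0 := by simp [Complex.I_ne_zero]
    field_simp
    ring
  have hint1 : IntervalIntegrable (fun u : ℝ => φ' u) volume 0 a :=
    hφ'cont.intervalIntegrable _ _
  have hint2 : IntervalIntegrable
      (fun u : ℝ => Complex.exp (I * (u:ℂ)^2) * HFun g (u * ε)) volume 0 a :=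
    (hce.mul
      (hHc.comp (continuous_id.mul continuous_const))).intervalIntegrable _ _
  have hsplit : (∫ u in (0:ℝ)..a, Complex.exp (I * (u:ℂ) ^ 2) * g (u * ε))
      = ((ε:ℂ) / (2 * I)) * (φ a - φ 0)
        - ((ε:ℂ)^2 / (2 * I)) *
          ∫ u in (0:ℝ)..a, Complex.exp (I * (u:ℂ)^2) * HFun g (u * ε) := by
    rw [intervalIntegral.integral_congr (g := fun u : ℝ =>
        ((ε:ℂ) / (2 * I)) * φ' u - ((ε:ℂ)^2 / (2 * I)) *
          (Complex.exp (I * (u:ℂ)^2) * HFun g (u * ε))) (fun u _ => hpt u)]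
    rw [intervalIntegral.integral_sub (hint1.const_mul _) (hint2.const_mul _),
      intervalIntegral.integral_const_mul, intervalIntegral.integral_const_mul, hFTC]
  rw [hsplit]
  -- norms
  have hexp : ∀ u : ℝ, ‖Complex.exp (I * (u:ℂ)^2)‖ = 1 := by
    intro u
    rw [Complex.norm_exp]
    norm_num [Complex.mul_re, Complex.mul_im, pow_two]
  have hnormc : ‖((ε:ℂ) / (2 * I))‖ = ε / 2 := by
    rw [norm_div, norm_mul, Complex.norm_I, Complex.norm_real, Real.norm_eq_abs,
      Complex.norm_two, abs_of_pos hε]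
    ring
  have hnormc2 : ‖((ε:ℂ)^2 / (2 * I))‖ = ε^2 / 2 := by
    rw [norm_div, norm_pow, norm_mul, Complex.norm_I, Complex.norm_real, Real.norm_eq_abs,
      Complex.norm_two, abs_of_pos hε]
    ring
  have hmem : ∀ u : ℝ, 0 ≤ u → u ≤ a → u * ε ∈ Set.Icc (0:ℝ) ν := by
    intro u h0 h1
    refine ⟨mul_nonneg h0 hε.le, ?_⟩
    calc u * ε ≤ a * ε := mul_le_mul_of_nonneg_right h1 hε.le
      _ ≤ ν := hεa
  have hφa : ‖φ a‖ ≤ C1 := by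
    rw [hφdef]
    calc ‖Complex.exp (I * (a:ℂ)^2) * hFun g (a * ε)‖
        = ‖Complex.exp (I * (a:ℂ)^2)‖ * ‖hFun g (a * ε)‖ := norm_mul _ _
      _ ≤ 1 * C1 := by
          rw [hexp]
          exact mul_le_mul_of_nonneg_left (hbound _ (hmem a ha.le le_rfl)) zero_le_one
      _ = C1 := one_mul _
  have hφ0 : ‖φ 0‖ ≤ C1 := by
    rw [hφdef]
    calc ‖Complex.exp (I * ((0:ℝ):ℂ)^2) * hFun g (0 * ε)‖
        = ‖Complex.exp (I * ((0:ℝ):ℂ)^2)‖ * ‖hFun g (0 * ε)‖ := norm_mul _ _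
      _ ≤ 1 * C1 := by
          rw [hexp]
          exact mul_le_mul_of_nonneg_left (hbound _ (hmem 0 le_rfl ha.le)) zero_le_one
      _ = C1 := one_mul _
  have hJ : ‖∫ u in (0:ℝ)..a, Complex.exp (I * (u:ℂ)^2) * HFun g (u * ε)‖ ≤ C2 * a := by
    have := intervalIntegral.norm_integral_le_of_norm_le_const (C := C2)
      (f := fun u : ℝ => Complex.exp (I * (u:ℂ)^2) * HFun g (u * ε)) (a := (0:ℝ)) (b := a) ?_
    · calc ‖∫ u in (0:ℝ)..a, Complex.exp (I * (u:ℂ)^2) * HFun g (u * ε)‖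
          ≤ C2 * |a - 0| := this
        _ = C2 * a := by rw [sub_zero, abs_of_pos ha]
    · intro u hu
      rw [Set.uIoc_of_le ha.le] at hu
      rw [norm_mul, hexp, one_mul]
      exact hBound _ (hmem u hu.1.le hu.2)
  calc ‖((ε:ℂ) / (2 * I)) * (φ a - φ 0)
        - ((ε:ℂ)^2 / (2 * I)) *
          ∫ u in (0:ℝ)..a, Complex.exp (I * (u:ℂ)^2) * HFun g (u * ε)‖
      ≤ ‖((ε:ℂ) / (2 * I)) * (φ a - φ 0)‖
        + ‖((ε:ℂ)^2 / (2 * I)) *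
          ∫ u in (0:ℝ)..a, Complex.exp (I * (u:ℂ)^2) * HFun g (u * ε)‖ := norm_sub_le _ _
    _ ≤ (ε / 2) * (C1 + C1) + (ε^2 / 2) * (C2 * a) := by
        gcongr ?_ + ?_
        · rw [norm_mul, hnormc]
          exact mul_le_mul_of_nonneg_left ((norm_sub_le _ _).trans (add_le_add hφa hφ0))
            (by positivity)
        · rw [norm_mul, hnormc2]
          exact mul_le_mul_of_nonneg_left hJ (by positivity)
    _ ≤ (C1 + ν * C2 / 2) * ε := by
        have h1 : ε^2 * (C2 * a) = ε * (C2 * (a * ε)) := by ring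
        have h2 : C2 * (a * ε) ≤ C2 * ν := mul_le_mul_of_nonneg_left hεa hC2_0
        nlinarith [mul_le_mul_of_nonneg_left h2 hε.le]
end

section
/- Let h : ℝ → ℂ with Fourier transform ĥ ∈ C_c^∞(ℝ). Then sup over t > 1 and α, β ∈ ℝ of the L^∞-norm in k of the function k ↦ ∫_{αt}^{βt} (e^{ix²/(4t)}/√t) ĥ(x/(2t)) e^{ixk} dx is finite, with bound depending only on h. -/
open MeasureTheory Complex

open intervalIntegral


noncomputable def Fr (y : ℝ) : ℂ := ∫ u in (0:ℝ)..y, Complex.exp (I * (u:ℂ)^2)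

lemma contFre : Continuous fun u : ℝ => Complex.exp (I * (u:ℂ)^2) := by
  continuity

lemma normFre (u : ℝ) : ‖Complex.exp (I * (u:ℂ)^2)‖ = 1 := by
  have h : (I * (u:ℂ)^2).re = 0 := by
    simp [Complex.mul_re, pow_two, Complex.mul_im]
  rw [Complex.norm_exp, h, Real.exp_zero]

lemma Fr_hasDerivAt (y : ℝ) : HasDerivAt Fr (Complex.exp (I * (y:ℂ)^2)) y := by
  refine intervalIntegral.integral_hasDerivAt_right
    (contFre.intervalIntegrable _ _)
    (contFre.stronglyMeasurableAtFilter _ _)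
    contFre.continuousAt

lemma Fr_neg (y : ℝ) : Fr (-y) = - Fr y := by
  have h : Fr (-y) = ∫ x in y..(0:ℝ), Complex.exp (I * ((-x : ℝ):ℂ)^2) := by
    rw [intervalIntegral.integral_comp_neg (fun u : ℝ => Complex.exp (I * (u:ℂ)^2))]
    simp [Fr]
  rw [h]
  have : ∀ x : ℝ, Complex.exp (I * ((-x : ℝ):ℂ)^2) = Complex.exp (I * (x:ℂ)^2) := by
    intro x; push_cast; ring_nf
  simp_rw [this]
  rw [intervalIntegral.integral_symm]
  rfl

lemma Fr_bound_nonneg (y : ℝ) (hy : 0 ≤ y) : ‖Fr y‖ ≤ 3 := by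
  rcases le_or_gt y 1 with h1 | h1
  · have := intervalIntegral.norm_integral_le_of_norm_le_const
      (C := 1) (f := fun u : ℝ => Complex.exp (I * (u:ℂ)^2)) (a := 0) (b := y)
      (fun x _ => by rw [normFre])
    calc ‖Fr y‖ ≤ 1 * |y - 0| := this
    _ ≤ 3 := by rw [one_mul]; rw [_root_.abs_of_nonneg (by linarith)]; linarith
  · -- y > 1
    have hsplit : Fr y = Fr 1 + ∫ u in (1:ℝ)..y, Complex.exp (I * (u:ℂ)^2) := by
      rw [Fr, Fr, intervalIntegral.integral_add_adjacent_intervals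
        (contFre.intervalIntegrable _ _) (contFre.intervalIntegrable _ _)]
    have hFr1 : ‖Fr 1‖ ≤ 1 := by
      have := intervalIntegral.norm_integral_le_of_norm_le_const
        (C := 1) (f := fun u : ℝ => Complex.exp (I * (u:ℂ)^2)) (a := 0) (b := 1)
        (fun x _ => by rw [normFre])
      simpa [Fr] using this
    -- integration by parts on [1, y]
    set u : ℝ → ℂ := fun x => (2 * I)⁻¹ * ((x:ℂ))⁻¹ with hu_def
    set u' : ℝ → ℂ := fun x => (2 * I)⁻¹ * (-(((x:ℂ))^2)⁻¹) with hu'_def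
    set v : ℝ → ℂ := fun x => Complex.exp (I * (x:ℂ)^2) with hv_def
    set v' : ℝ → ℂ := fun x => Complex.exp (I * (x:ℂ)^2) * (I * (2*(x:ℂ))) with hv'_def
    have hpos : ∀ x ∈ Set.uIcc (1:ℝ) y, (1:ℝ) ≤ x := by
      intro x hx
      rw [Set.uIcc_of_le (by linarith)] at hx
      exact hx.1
    have hu : ∀ x ∈ Set.uIcc (1:ℝ) y, HasDerivAt u (u' x) x := by
      intro x hx
      have hx0 : (x:ℂ) ≠ 0 := by
        exact_mod_cast ne_of_gt (by linarith [hpos x hx] : (0:ℝ) < x)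
      have h1 : HasDerivAt (fun z : ℂ => z⁻¹) (-(((x:ℂ))^2)⁻¹) (x:ℂ) := hasDerivAt_inv hx0
      have h2 : HasDerivAt (fun x : ℝ => ((x:ℂ))⁻¹) (-(((x:ℂ))^2)⁻¹) x := h1.comp_ofReal
      simpa [hu_def, hu'_def] using h2.const_mul ((2*I)⁻¹)
    have hv : ∀ x ∈ Set.uIcc (1:ℝ) y, HasDerivAt v (v' x) x := by
      intro x _
      have h1 : HasDerivAt (fun z : ℂ => I * z^2) (I * (2*(x:ℂ))) (x:ℂ) := by
        simpa [mul_comm] using ((hasDerivAt_pow 2 (x:ℂ)).const_mul I)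
      have h2 : HasDerivAt (fun x : ℝ => I * (x:ℂ)^2) (I * (2*(x:ℂ))) x := h1.comp_ofReal
      simpa [hv_def, hv'_def] using h2.cexp
    have hu'int : IntervalIntegrable u' MeasureTheory.volume 1 y := by
      apply ContinuousOn.intervalIntegrable
      apply ContinuousOn.mul continuousOn_const
      apply ContinuousOn.neg
      apply ContinuousOn.inv₀
      · fun_prop
      · intro x hx
        have := hpos x hx
        exact_mod_cast pow_ne_zero 2 (by exact_mod_cast ne_of_gt (by linarith : (0:ℝ) < x) : (x:ℂ) ≠ 0)
    have hv'int : IntervalIntegrable v' MeasureTheory.volume 1 y := by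
      apply Continuous.intervalIntegrable; fun_prop
    have hibp := intervalIntegral.integral_mul_deriv_eq_deriv_mul hu hv hu'int hv'int
    have heq : ∀ x ∈ Set.uIcc (1:ℝ) y, u x * v' x = Complex.exp (I * (x:ℂ)^2) := by
      intro x hx
      have hx0 : (x:ℂ) ≠ 0 := by
        exact_mod_cast ne_of_gt (by linarith [hpos x hx] : (0:ℝ) < x)
      simp only [hu_def, hv'_def]
      field_simp
    have hmain : (∫ x in (1:ℝ)..y, Complex.exp (I * (x:ℂ)^2))
        = u y * v y - u 1 * v 1 - ∫ x in (1:ℝ)..y, u' x * v x := by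
      rw [← hibp]
      exact intervalIntegral.integral_congr fun x hx => (heq x hx).symm
    -- bounds
    have hnu : ∀ x : ℝ, 1 ≤ x → ‖u x‖ ≤ 1/2 := by
      intro x hx
      have h2 : ‖u x‖ = (2 * |x|)⁻¹ := by
        simp only [hu_def, norm_mul, norm_inv, Complex.norm_real, Real.norm_eq_abs,
          Complex.norm_I, Complex.norm_two, mul_inv]
        ring
      rw [h2, _root_.abs_of_nonneg (by linarith : (0:ℝ) ≤ x)]
      rw [inv_le_comm₀ (by linarith) (by norm_num)]
      linarith
    have hnv : ∀ x : ℝ, ‖v x‖ = 1 := fun x => normFre x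
    have htail : ‖∫ x in (1:ℝ)..y, u' x * v x‖ ≤ 1/2 := by
      have hb : ∀ᵐ x ∂(MeasureTheory.volume.restrict (Set.uIoc (1:ℝ) y)),
          ‖u' x * v x‖ ≤ (1/2) * (x^2)⁻¹ := by
        refine MeasureTheory.ae_restrict_of_forall_mem measurableSet_uIoc ?_
        intro x hx
        rw [Set.uIoc_of_le (by linarith)] at hx
        have hx1 : (1:ℝ) < x := hx.1
        have hxne : (x:ℂ) ≠ 0 := by exact_mod_cast ne_of_gt (by linarith : (0:ℝ) < x)
        have : ‖u' x * v x‖ = (1/2) * (x^2)⁻¹ := by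
          rw [norm_mul, hnv, mul_one]
          simp only [hu'_def, norm_mul, norm_neg, norm_inv]
          rw [show ((x:ℂ))^2 = ((x^2 : ℝ):ℂ) by push_cast; ring]
          simp [Complex.norm_I, Complex.norm_real,
            _root_.abs_of_nonneg (by positivity : (0:ℝ) ≤ x^2), mul_inv]
        rw [this]
      have hgi : IntervalIntegrable (fun x : ℝ => (1/2) * (x^2)⁻¹)
          MeasureTheory.volume 1 y := by
        apply ContinuousOn.intervalIntegrable
        apply ContinuousOn.mul continuousOn_const
        apply ContinuousOn.inv₀ (by fun_prop)
        intro x hx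
        rw [Set.uIcc_of_le (by linarith)] at hx
        have hx1 := hx.1
        positivity
      have h1 := intervalIntegral.norm_integral_le_abs_of_norm_le hb hgi
      have hcomp : (∫ x in (1:ℝ)..y, (1/2) * (x^2)⁻¹) = (1/2) * (1 - y⁻¹) := by
        rw [intervalIntegral.integral_const_mul]
        have hz : (∫ x in (1:ℝ)..y, x ^ (-2 : ℤ)) = (y ^ (-1:ℤ) - 1 ^ (-1:ℤ)) / (-1 : ℝ) := by
          rw [integral_zpow]
          · norm_num
          · refine Or.inr ⟨by norm_num, ?_⟩
            rw [Set.uIcc_of_le (by linarith)]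
            intro hc
            exact absurd hc.1 (by norm_num)
        have hz2 : (∫ x in (1:ℝ)..y, (x^2)⁻¹) = (∫ x in (1:ℝ)..y, x ^ (-2 : ℤ)) := by
          apply intervalIntegral.integral_congr
          intro x _
          simp only [zpow_neg]
          norm_cast
        rw [hz2, hz]
        simp
        ring
      rw [hcomp] at h1
      have hy0 : 0 < y⁻¹ := by positivity
      calc ‖∫ x in (1:ℝ)..y, u' x * v x‖ ≤ |(1/2) * (1 - y⁻¹)| := h1
        _ ≤ 1/2 := by
            rw [abs_mul, _root_.abs_of_nonneg (by norm_num : (0:ℝ) ≤ 1/2)]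
            have : |1 - y⁻¹| ≤ 1 := by
              rw [abs_le]; constructor <;> [linarith [inv_le_one_of_one_le₀ (by linarith : (1:ℝ) ≤ y)]; linarith]
            linarith
    have hy1 : (1:ℝ) ≤ y := le_of_lt h1
    have hI2 : ‖∫ x in (1:ℝ)..y, Complex.exp (I * (x:ℂ)^2)‖ ≤ 2 := by
      rw [hmain]
      calc ‖u y * v y - u 1 * v 1 - ∫ x in (1:ℝ)..y, u' x * v x‖
          ≤ ‖u y * v y - u 1 * v 1‖ + ‖∫ x in (1:ℝ)..y, u' x * v x‖ := norm_sub_le _ _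
        _ ≤ (‖u y * v y‖ + ‖u 1 * v 1‖) + 1/2 := by
            gcongr; exact norm_sub_le _ _
        _ ≤ (1/2 + 1/2) + 1/2 := by
            gcongr
            · rw [norm_mul, hnv, mul_one]; exact hnu y hy1
            · rw [norm_mul, hnv, mul_one]; exact hnu 1 le_rfl
        _ ≤ 2 := by norm_num
    calc ‖Fr y‖ = ‖Fr 1 + ∫ u in (1:ℝ)..y, Complex.exp (I * (u:ℂ)^2)‖ := by rw [hsplit]
      _ ≤ ‖Fr 1‖ + ‖∫ u in (1:ℝ)..y, Complex.exp (I * (u:ℂ)^2)‖ := norm_add_le _ _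
      _ ≤ 1 + 2 := add_le_add hFr1 hI2
      _ = 3 := by norm_num

lemma Fr_bound (y : ℝ) : ‖Fr y‖ ≤ 3 := by
  rcases le_or_gt 0 y with hy | hy
  · exact Fr_bound_nonneg y hy
  · have : y = -(-y) := by ring
    rw [this, Fr_neg, norm_neg]
    exact Fr_bound_nonneg (-y) (by linarith)

lemma Fr_continuous : Continuous Fr :=
  continuous_iff_continuousAt.2 fun y => (Fr_hasDerivAt y).continuousAt


lemma vdc (g g' : ℝ → ℂ) (hg : ∀ x, HasDerivAt g (g' x) x)
    (hg'c : Continuous g') (Cg : ℝ) (hCg : ∀ x, ‖g x‖ ≤ Cg) (a b : ℝ) :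
    ‖∫ u in a..b, Complex.exp (I * (u:ℂ)^2) * g u‖ ≤
      6 * Cg + 3 * |∫ u in a..b, ‖g' u‖| := by
  have hrw : (∫ u in a..b, Complex.exp (I * (u:ℂ)^2) * g u)
      = ∫ u in a..b, g u * Complex.exp (I * (u:ℂ)^2) :=
    intervalIntegral.integral_congr fun x _ => mul_comm _ _
  have hibp := intervalIntegral.integral_mul_deriv_eq_deriv_mul
    (a := a) (b := b) (u := g) (v := Fr) (u' := g') (v' := fun x : ℝ => Complex.exp (I * (x:ℂ)^2))
    (fun x _ => hg x) (fun x _ => Fr_hasDerivAt x)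
    (hg'c.intervalIntegrable _ _) (contFre.intervalIntegrable _ _)
  rw [hrw, hibp]
  have hterm : ∀ x : ℝ, ‖g x * Fr x‖ ≤ Cg * 3 := fun x => by
    rw [norm_mul]
    exact mul_le_mul (hCg x) (Fr_bound x) (norm_nonneg _) ((norm_nonneg _).trans (hCg x))
  have htail : ‖∫ x in a..b, g' x * Fr x‖ ≤ 3 * |∫ u in a..b, ‖g' u‖| := by
    have hb : ∀ᵐ x ∂(MeasureTheory.volume.restrict (Set.uIoc a b)),
        ‖g' x * Fr x‖ ≤ ‖g' x‖ * 3 := by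
      refine MeasureTheory.ae_of_all _ fun x => ?_
      rw [norm_mul]
      exact mul_le_mul_of_nonneg_left (Fr_bound x) (norm_nonneg _)
    have hgi : IntervalIntegrable (fun x : ℝ => ‖g' x‖ * 3) MeasureTheory.volume a b :=
      ((hg'c.norm).mul continuous_const).intervalIntegrable _ _
    have h1 := intervalIntegral.norm_integral_le_abs_of_norm_le hb hgi
    rw [intervalIntegral.integral_mul_const, abs_mul] at h1
    calc ‖∫ x in a..b, g' x * Fr x‖ ≤ |∫ u in a..b, ‖g' u‖| * |(3:ℝ)| := h1
      _ = 3 * |∫ u in a..b, ‖g' u‖| := by rw [_root_.abs_of_nonneg (by norm_num : (0:ℝ) ≤ 3)]; ring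
  calc ‖g b * Fr b - g a * Fr a - ∫ x in a..b, g' x * Fr x‖
      ≤ ‖g b * Fr b - g a * Fr a‖ + ‖∫ x in a..b, g' x * Fr x‖ := norm_sub_le _ _
    _ ≤ (‖g b * Fr b‖ + ‖g a * Fr a‖) + 3 * |∫ u in a..b, ‖g' u‖| :=
        add_le_add (norm_sub_le _ _) htail
    _ ≤ (Cg * 3 + Cg * 3) + 3 * |∫ u in a..b, ‖g' u‖| := by
        gcongr; exacts [hterm b, hterm a]
    _ = 6 * Cg + 3 * |∫ u in a..b, ‖g' u‖| := by ring

lemma abs_intervalIntegral_le (φ : ℝ → ℝ) (hint : MeasureTheory.Integrable φ)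
    (hpos : ∀ x, 0 ≤ φ x) (p q : ℝ) :
    |∫ x in p..q, φ x| ≤ ∫ x, φ x := by
  have key : ∀ p q : ℝ, p ≤ q → |∫ x in p..q, φ x| ≤ ∫ x, φ x := by
    intro p q h
    rw [intervalIntegral.integral_of_le h, _root_.abs_of_nonneg
      (MeasureTheory.setIntegral_nonneg measurableSet_Ioc fun x _ => hpos x)]
    exact MeasureTheory.setIntegral_le_integral hint (MeasureTheory.ae_of_all _ hpos)
  rcases le_total p q with h | h
  · exact key p q h
  · rw [intervalIntegral.integral_symm, abs_neg]
    exact key q p h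


/-- Uniform boundedness of truncated Fresnel-type oscillatory integrals,
for `ĥ ∈ C_c^∞(ℝ)`. -/
theorem fresnel_uniform_bound (hhat : ℝ → ℂ)
    (hsm : ContDiff ℝ (⊤ : ℕ∞) hhat) (hsupp : HasCompactSupport hhat) :
    ∃ C : ℝ, ∀ t α β k : ℝ, 1 < t →
      ‖∫ x in (α * t)..(β * t),
          Complex.exp (I * (x:ℂ) ^ 2 / (4 * (t:ℂ))) / (Real.sqrt t : ℂ) *
            hhat (x / (2 * t)) * Complex.exp (I * (x:ℂ) * (k:ℂ))‖ ≤ C := by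
  have hcont : Continuous hhat := hsm.continuous
  have hdiff : Differentiable ℝ hhat := hsm.differentiable (by simp)
  set hd : ℝ → ℂ := deriv hhat with hd_def
  have hdc : Continuous hd := hsm.continuous_deriv (by simp)
  have hdsupp : HasCompactSupport hd := hsupp.deriv
  have hdint : MeasureTheory.Integrable (fun x : ℝ => ‖hd x‖) :=
    (hdc.integrable_of_hasCompactSupport hdsupp).norm
  obtain ⟨Cg, hCg⟩ := hsupp.exists_bound_of_continuous hcont
  set C1 : ℝ := ∫ x : ℝ, ‖hd x‖ with hC1_def
  refine ⟨2 * (6 * Cg + 3 * C1), ?_⟩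
  intro t α β k ht
  have ht0 : (0:ℝ) < t := lt_trans one_pos ht
  set s : ℝ := Real.sqrt t with hs_def
  have hs0 : 0 < s := Real.sqrt_pos.2 ht0
  have hs0' : s ≠ 0 := ne_of_gt hs0
  have hsC : ((s:ℝ):ℂ) ≠ 0 := by exact_mod_cast hs0'
  have hs2 : s ^ 2 = t := Real.sq_sqrt ht0.le
  set g : ℝ → ℂ := fun u => hhat (u / s - k) with hg_def
  set g' : ℝ → ℂ := fun u => (s⁻¹ : ℝ) • hd (u / s - k) with hg'_def
  set G : ℝ → ℂ := fun u => Complex.exp (I * (u:ℂ)^2) * g u with hG_def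
  set c : ℝ := 1 / (2 * s) with hc_def
  have hc0 : c ≠ 0 := by positivity
  -- pointwise identity
  have hpoint : ∀ x : ℝ,
      Complex.exp (I * (x:ℂ) ^ 2 / (4 * (t:ℂ))) / (s : ℂ) *
          hhat (x / (2 * t)) * Complex.exp (I * (x:ℂ) * (k:ℂ))
      = Complex.exp (-(I * (t:ℂ) * (k:ℂ)^2)) * (s:ℂ)⁻¹ * G (c * x + k * s) := by
    intro x
    have harg : (c * x + k * s) / s - k = x / (2 * t) := by
      rw [← hs2, hc_def]; field_simp; ring
    have hexp : I * (x:ℂ) ^ 2 / (4 * (t:ℂ)) + I * (x:ℂ) * (k:ℂ)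
        = -(I * (t:ℂ) * (k:ℂ)^2) + I * (((c * x + k * s : ℝ) : ℂ))^2 := by
      have htC : ((s:ℝ):ℂ)^2 = (t:ℂ) := by
        rw [← hs2]; push_cast; ring
      rw [← htC, hc_def]
      push_cast
      field_simp
      ring
    simp only [hG_def, hg_def, harg]
    have hee : Complex.exp (I * (x:ℂ) ^ 2 / (4 * (t:ℂ))) * Complex.exp (I * (x:ℂ) * (k:ℂ))
        = Complex.exp (-(I * (t:ℂ) * (k:ℂ)^2)) * Complex.exp (I * (((c * x + k * s : ℝ) : ℂ))^2) := by
      rw [← Complex.exp_add, ← Complex.exp_add, hexp]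
    push_cast at hee ⊢
    field_simp
    rw [show ((x:ℂ) * c + s * k) = c * x + k * s by ring]
    linear_combination (hhat (x / (2 * t))) * hee
  rw [intervalIntegral.integral_congr fun x _ => hpoint x]
  rw [intervalIntegral.integral_const_mul]
  rw [intervalIntegral.integral_comp_mul_add G hc0 (k * s)]
  -- norms
  rw [norm_mul, norm_smul]
  have hnorm1 : ‖Complex.exp (-(I * (t:ℂ) * (k:ℂ)^2)) * (s:ℂ)⁻¹‖ = s⁻¹ := by
    rw [norm_mul]
    have h1 : ‖Complex.exp (-(I * (t:ℂ) * (k:ℂ)^2))‖ = 1 := by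
      rw [Complex.norm_exp]
      have : (-(I * (t:ℂ) * (k:ℂ)^2)).re = 0 := by
        simp [Complex.mul_re, Complex.mul_im, pow_two]
      rw [this, Real.exp_zero]
    rw [h1, one_mul, norm_inv, Complex.norm_real, Real.norm_eq_abs,
      _root_.abs_of_nonneg hs0.le]
  rw [hnorm1]
  have hcinv : ‖c⁻¹‖ = 2 * s := by
    rw [hc_def, Real.norm_eq_abs, one_div, inv_inv, _root_.abs_of_nonneg (by positivity)]
  rw [hcinv]
  -- apply vdc
  have hgderiv : ∀ u : ℝ, HasDerivAt g (g' u) u := by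
    intro u
    have hφ : HasDerivAt (fun u : ℝ => u / s - k) (1 / s) u := by
      simpa using ((hasDerivAt_id u).div_const s).sub_const k
    have hh : HasDerivAt hhat (hd (u / s - k)) (u / s - k) :=
      (hdiff (u / s - k)).hasDerivAt
    have := HasDerivAt.scomp u hh hφ
    simpa [hg_def, hg'_def, Function.comp_def, one_div] using this
  have hg'c : Continuous g' := by
    apply Continuous.fun_const_smul
    exact hdc.comp (by fun_prop)
  have hvdc := vdc g g' hgderiv hg'c Cg (fun u => hCg _) (c * (α * t) + k * s)
    (c * (β * t) + k * s)
  -- bound the integral of ‖g'‖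
  set p : ℝ := c * (α * t) + k * s with hp_def
  set q : ℝ := c * (β * t) + k * s with hq_def
  have hint_g' : |∫ u in p..q, ‖g' u‖| ≤ C1 := by
    have h1 : ∀ u : ℝ, ‖g' u‖ = s⁻¹ * ‖hd (s⁻¹ * u + -k)‖ := by
      intro u
      rw [hg'_def]
      simp only []
      rw [norm_smul, Real.norm_eq_abs, _root_.abs_of_nonneg (by positivity)]
      rw [div_eq_inv_mul, sub_eq_add_neg]
    rw [intervalIntegral.integral_congr fun u _ => h1 u]
    rw [intervalIntegral.integral_const_mul]
    rw [intervalIntegral.integral_comp_mul_add (fun v => ‖hd v‖) (inv_ne_zero hs0') (-k)]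
    rw [inv_inv, smul_eq_mul, ← mul_assoc, inv_mul_cancel₀ hs0', one_mul]
    exact abs_intervalIntegral_le _ hdint (fun x => norm_nonneg _) _ _
  calc s⁻¹ * (2 * s * ‖∫ u in p..q, G u‖)
      = 2 * ‖∫ u in p..q, G u‖ := by field_simp
    _ ≤ 2 * (6 * Cg + 3 * |∫ u in p..q, ‖g' u‖|) := by
        rw [hG_def]
        gcongr
    _ ≤ 2 * (6 * Cg + 3 * C1) := by gcongr
end

section
/- For l ∈ ℝ, k ∈ ℝ, t ≥ 1, and ĥ ∈ C_c^∞(ℝ), the integral ∫₀^l e^{iξ²} ĥ(−k + ξ/√t) dξ is bounded in absolute value by a constant depending only on ĥ, uniformly in l, k, and t ≥ 1. -/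
open MeasureTheory Complex intervalIntegral Set
set_option maxHeartbeats 1000000

lemma exp_norm_one' (b : ℝ) : ‖Complex.exp (I * (b:ℂ)^2)‖ = 1 := by
  rw [Complex.norm_exp]
  simp [← Complex.ofReal_pow, mul_comm]

lemma expderiv' (x : ℝ) : HasDerivAt (fun ξ : ℝ => Complex.exp (I * (ξ:ℂ)^2))
    (Complex.exp (I * (x:ℂ)^2) * (2 * I * x)) x := by
  have h1 : HasDerivAt (fun ξ : ℝ => (ξ:ℂ)) 1 x := Complex.ofRealCLM.hasDerivAt
  have h2 : HasDerivAt (fun ξ : ℝ => I * ((ξ:ℂ) * ξ)) (I * (1 * x + x * 1)) x :=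
    (h1.mul h1).const_mul I
  have h3 := h2.cexp
  simp only [← pow_two] at h3
  convert h3 using 1
  ring

lemma ibp_bound' (g g' : ℝ → ℂ) (M M₁ : ℝ) (hM : ∀ x, ‖g x‖ ≤ M)
    (hder : ∀ x, HasDerivAt g (g' x) x) (hg'cont : Continuous g')
    (hg'int : Integrable g') (hM₁ : ∫ x, ‖g' x‖ ≤ M₁)
    (a b : ℝ) (hab : a ≤ b) (hsep : ∀ x ∈ Set.Icc a b, 1 ≤ |x|) :
    ‖∫ ξ in a..b, Complex.exp (I * (ξ:ℂ) ^ 2) * g ξ‖ ≤ 2 * M + M₁ := by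
  have hM0 : 0 ≤ M := le_trans (norm_nonneg _) (hM 0)
  have hM₁0 : 0 ≤ M₁ := le_trans (integral_nonneg (fun x => norm_nonneg _)) hM₁
  have hdiff : Differentiable ℝ g := fun x => (hder x).differentiableAt
  have hgc : Continuous g := hdiff.continuous
  have hMicc : Set.uIcc a b = Set.Icc a b := Set.uIcc_of_le hab
  have habs : ∀ x ∈ Set.uIcc a b, 1 ≤ |x| := fun x hx => hsep x (hMicc ▸ hx)
  have hne : ∀ x ∈ Set.uIcc a b, x ≠ 0 := by
    intro x hx h0
    have := habs x hx
    rw [h0] at this; norm_num at this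
  have hvc : Continuous (fun x : ℝ => Complex.exp (I * (x:ℂ)^2)) :=
    Complex.continuous_exp.comp (continuous_const.mul (Complex.continuous_ofReal.pow 2))
  have hcast : Continuous (fun x : ℝ => ((x:ℂ))) := Complex.continuous_ofReal
  set u : ℝ → ℂ := fun x => -I * g x / (2 * x) with hu_def
  set u' : ℝ → ℂ := fun x => -I * g' x / (2 * x) + I * g x / (2 * x ^ 2) with hu'_def
  have hnorm2x : ∀ x : ℝ, ‖(2 * (x:ℂ))‖ = 2 * |x| := by
    intro x
    rw [norm_mul, Complex.norm_real, Real.norm_eq_abs]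
    norm_num
  have hden : ∀ x : ℝ, x ≠ 0 → (2 * (x:ℂ)) ≠ 0 := by
    intro x hx
    simp [hx]
  have hderu : ∀ x ∈ Set.uIcc a b, HasDerivAt u (u' x) x := by
    intro x hx
    have hx0 : (x:ℝ) ≠ 0 := hne x hx
    have hxC : ((x:ℂ)) ≠ 0 := by exact_mod_cast hx0
    have h1 : HasDerivAt (fun y : ℝ => 2 * (y:ℂ)) (2 * 1) x :=
      (Complex.ofRealCLM.hasDerivAt (x := x)).const_mul 2
    have := ((hder x).const_mul (-I)).div h1 (hden x hx0)
    convert this using 1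
    case e'_4 => rfl
    case e'_8 => rfl
    have hxx : ((x:ℂ))^2 * ((x:ℂ))⁻¹ = (x:ℂ) := by
      rw [sq]; field_simp
    have hxx2 : ((x:ℂ))^2 * (((x:ℂ))⁻¹)^2 = 1 := by
      rw [sq]; field_simp
    rw [hu'_def]
    field_simp [hxC]
    ring
  have hcontu' : ContinuousOn u' (Set.uIcc a b) := by
    apply ContinuousOn.add
    · exact ((continuous_const.mul hg'cont).continuousOn).div
        ((continuous_const.mul hcast).continuousOn) (fun x hx => hden x (hne x hx))
    · apply ((continuous_const.mul hgc).continuousOn).div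
        ((continuous_const.mul (hcast.pow 2)).continuousOn)
      intro x hx
      have hxC : ((x:ℂ)) ≠ 0 := by exact_mod_cast hne x hx
      simp [hxC]
  have hintu' : IntervalIntegrable u' volume a b := hcontu'.intervalIntegrable
  have hintv' : IntervalIntegrable (fun x : ℝ => Complex.exp (I * (x:ℂ)^2) * (2 * I * x))
      volume a b :=
    (Continuous.intervalIntegrable (hvc.mul (continuous_const.mul hcast)) a b)
  have hibp := intervalIntegral.integral_mul_deriv_eq_deriv_mul hderu
    (fun x _ => expderiv' x) hintu' hintv'
  have heq : ∫ ξ in a..b, Complex.exp (I * (ξ:ℂ) ^ 2) * g ξ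
      = ∫ x in a..b, u x * (Complex.exp (I * (x:ℂ)^2) * (2 * I * x)) := by
    apply intervalIntegral.integral_congr
    intro x hx
    have hxC : ((x:ℂ)) ≠ 0 := by exact_mod_cast hne x hx
    rw [hu_def]
    have hI2 : I * I = -1 := Complex.I_mul_I
    field_simp [hxC]
    ring_nf
    rw [Complex.I_sq]
    ring
  rw [heq, hibp]
  -- bounds on u
  have hub : ∀ x : ℝ, 1 ≤ |x| → ‖u x‖ ≤ M / 2 := by
    intro x hx
    rw [hu_def]
    simp only [norm_div, norm_mul, norm_neg, Complex.norm_I, one_mul]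
    have h2x : ‖(2:ℂ)‖ * ‖(x:ℂ)‖ = 2 * |x| := by
      rw [Complex.norm_real, Real.norm_eq_abs]; norm_num
    rw [h2x]
    exact div_le_div₀ hM0 (hM x) two_pos (by linarith)
  have hua : ‖u a‖ ≤ M / 2 := hub a (hsep a ⟨le_refl a, hab⟩)
  have hubb : ‖u b‖ ≤ M / 2 := hub b (hsep b ⟨hab, le_refl b⟩)
  -- bound on the remaining integral
  have h0not : (0:ℝ) ∉ Set.uIcc a b := fun h => (hne 0 h) rfl
  have hcase : 1 ≤ a ∨ b ≤ -1 := by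
    rcases le_abs.mp (hsep a ⟨le_refl a, hab⟩) with h | h
    · exact Or.inl h
    rcases le_abs.mp (hsep b ⟨hab, le_refl b⟩) with h' | h'
    · exfalso
      have := hsep 0 ⟨by linarith, by linarith⟩
      norm_num at this
    · exact Or.inr (by linarith)
  have hinv : a⁻¹ - b⁻¹ ≤ 1 := by
    rcases hcase with h | h
    · have hb1 : (1:ℝ) ≤ b := le_trans h hab
      have h1 : a⁻¹ ≤ 1 := inv_le_one_of_one_le₀ h
      have h2 : (0:ℝ) ≤ b⁻¹ := inv_nonneg.mpr (by linarith)
      linarith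
    · have ha1 : a ≤ -1 := le_trans hab h
      have h1 : a⁻¹ ≤ 0 := inv_nonpos.mpr (by linarith)
      have h2 : (-b)⁻¹ ≤ 1 := inv_le_one_of_one_le₀ (by linarith)
      have h3 : -b⁻¹ ≤ 1 := by rwa [← inv_neg]
      linarith
  have hzpow : ∫ x in a..b, (x:ℝ) ^ (-2 : ℤ) = a⁻¹ - b⁻¹ := by
    rw [integral_zpow (Or.inr ⟨by norm_num, h0not⟩)]
    norm_num
    ring
  have hbd_int : ‖∫ x in a..b, u' x * Complex.exp (I * (x:ℂ)^2)‖ ≤ M / 2 + M₁ / 2 := by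
    have hptwise : ∀ x ∈ Set.Icc a b, ‖u' x * Complex.exp (I * (x:ℂ)^2)‖
        ≤ ‖g' x‖ / 2 + (M / 2) * (x ^ (-2 : ℤ)) := by
      intro x hx
      have hx1 : 1 ≤ |x| := hsep x hx
      have hx0 : x ≠ 0 := by intro h; rw [h] at hx1; norm_num at hx1
      have hxC : ((x:ℂ)) ≠ 0 := by exact_mod_cast hx0
      rw [norm_mul, exp_norm_one', mul_one, hu'_def]
      have h1 : ‖-I * g' x / (2 * (x:ℂ))‖ ≤ ‖g' x‖ / 2 := by
        rw [norm_div, norm_mul, norm_neg, Complex.norm_I, one_mul, hnorm2x]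
        apply div_le_div₀ (norm_nonneg _) (le_refl _) two_pos (by linarith)
      have h2 : ‖I * g x / (2 * (x:ℂ) ^ 2)‖ ≤ (M / 2) * (x ^ (-2 : ℤ)) := by
        have : ‖(2 * (x:ℂ) ^ 2)‖ = 2 * x ^ 2 := by
          rw [norm_mul, norm_pow, Complex.norm_real, Real.norm_eq_abs]
          norm_num [_root_.sq_abs]
        rw [norm_div, norm_mul, Complex.norm_I, one_mul, this]
        rw [zpow_neg, zpow_two]
        have hx2 : (0:ℝ) < x ^ 2 := by positivity
        rw [div_le_iff₀ (by positivity)]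
        have hgx : ‖g x‖ ≤ M := hM x
        have h1x2 : (1:ℝ) ≤ x ^ 2 := by nlinarith [_root_.sq_abs x]
        have : ((x * x : ℝ))⁻¹ * (2 * x ^ 2) = 2 := by
          field_simp [hx0]
        rw [mul_assoc, this]
        linarith
      calc ‖-I * g' x / (2 * (x:ℂ)) + I * g x / (2 * (x:ℂ) ^ 2)‖
          ≤ ‖-I * g' x / (2 * (x:ℂ))‖ + ‖I * g x / (2 * (x:ℂ) ^ 2)‖ := norm_add_le _ _
        _ ≤ ‖g' x‖ / 2 + (M / 2) * (x ^ (-2 : ℤ)) := add_le_add h1 h2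
    calc ‖∫ x in a..b, u' x * Complex.exp (I * (x:ℂ)^2)‖
        ≤ ∫ x in a..b, ‖u' x * Complex.exp (I * (x:ℂ)^2)‖ :=
          intervalIntegral.norm_integral_le_integral_norm hab
      _ ≤ ∫ x in a..b, (‖g' x‖ / 2 + (M / 2) * (x ^ (-2 : ℤ))) := by
          apply intervalIntegral.integral_mono_on hab ?_ ?_ hptwise
          · exact ((hcontu'.mul hvc.continuousOn).norm).intervalIntegrable
          · apply IntervalIntegrable.add
            · exact (hg'cont.norm.div_const 2).intervalIntegrable a b
            · exact (continuousOn_const.mul ((continuousOn_zpow₀ (-2)).mono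
                (fun y hy => hne y hy))).intervalIntegrable
      _ = (∫ x in a..b, ‖g' x‖) / 2 + (M / 2) * (a⁻¹ - b⁻¹) := by
          rw [intervalIntegral.integral_add, intervalIntegral.integral_div,
            intervalIntegral.integral_const_mul, hzpow]
          · exact (hg'cont.norm.div_const 2).intervalIntegrable a b
          · exact (continuousOn_const.mul ((continuousOn_zpow₀ (-2)).mono
              (fun y hy => hne y hy))).intervalIntegrable
      _ ≤ M₁ / 2 + M / 2 := by
          have h1 : ∫ x in a..b, ‖g' x‖ ≤ M₁ := by
            rw [intervalIntegral.integral_of_le hab]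
            refine le_trans (setIntegral_le_integral hg'int.norm ?_) hM₁
            exact Filter.Eventually.of_forall (fun x => norm_nonneg _)
          have h2 : (M / 2) * (a⁻¹ - b⁻¹) ≤ M / 2 := by
            nlinarith
          linarith
      _ = M / 2 + M₁ / 2 := by ring
  calc ‖u b * Complex.exp (I * (b:ℂ)^2) - u a * Complex.exp (I * (a:ℂ)^2)
        - ∫ x in a..b, u' x * Complex.exp (I * (x:ℂ)^2)‖
      ≤ ‖u b * Complex.exp (I * (b:ℂ)^2) - u a * Complex.exp (I * (a:ℂ)^2)‖
        + ‖∫ x in a..b, u' x * Complex.exp (I * (x:ℂ)^2)‖ := norm_sub_le _ _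
    _ ≤ ‖u b * Complex.exp (I * (b:ℂ)^2)‖ + ‖u a * Complex.exp (I * (a:ℂ)^2)‖
        + ‖∫ x in a..b, u' x * Complex.exp (I * (x:ℂ)^2)‖ := by
        have := norm_sub_le (u b * Complex.exp (I * (b:ℂ)^2)) (u a * Complex.exp (I * (a:ℂ)^2))
        linarith
    _ ≤ M / 2 + M / 2 + (M / 2 + M₁ / 2) := by
        rw [norm_mul, norm_mul, exp_norm_one', exp_norm_one', mul_one, mul_one]
        have := hbd_int
        linarith
    _ ≤ 2 * M + M₁ := by linarith

/-- Uniform bound on `∫₀^l e^{iξ²} ĥ(−k + ξ/√t) dξ` for `ĥ ∈ C_c^∞(ℝ)`. -/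
theorem uniform_oscillatory_bound (hhat : ℝ → ℂ)
    (hsm : ContDiff ℝ (⊤ : ℕ∞) hhat) (hsupp : HasCompactSupport hhat) :
    ∃ C : ℝ, ∀ l k t : ℝ, 1 ≤ t →
      ‖∫ ξ in (0:ℝ)..l, Complex.exp (I * (ξ:ℂ) ^ 2) * hhat (-k + ξ / Real.sqrt t)‖ ≤ C := by
  obtain ⟨M₀, hM₀⟩ := hsupp.exists_bound_of_continuous hsm.continuous
  set M : ℝ := max M₀ 0 with hM_def
  have hM : ∀ x, ‖hhat x‖ ≤ M := fun x => le_trans (hM₀ x) (le_max_left _ _)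
  have hM0 : 0 ≤ M := le_max_right _ _
  have hdc : Continuous (deriv hhat) := hsm.continuous_deriv (by simp)
  have hds : HasCompactSupport (deriv hhat) := hsupp.deriv
  have hdint : Integrable (deriv hhat) := hdc.integrable_of_hasCompactSupport hds
  set M₁ : ℝ := ∫ y, ‖deriv hhat y‖ with hM₁_def
  have hM₁0 : 0 ≤ M₁ := integral_nonneg fun y => norm_nonneg _
  refine ⟨3 * M + M₁, ?_⟩
  intro l k t ht
  set s : ℝ := Real.sqrt t with hs_def
  have hs1 : 1 ≤ s := Real.one_le_sqrt.mpr ht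
  have hs0 : 0 < s := lt_of_lt_of_le one_pos hs1
  set g : ℝ → ℂ := fun ξ => hhat (-k + ξ / s) with hg_def
  set g' : ℝ → ℂ := fun ξ => (1 / s) • deriv hhat (-k + ξ / s) with hg'_def
  have hφ : ∀ ξ : ℝ, HasDerivAt (fun y : ℝ => -k + y / s) (1 / s) ξ := fun ξ =>
    ((hasDerivAt_id ξ).div_const s).const_add (-k)
  have hder : ∀ ξ, HasDerivAt g (g' ξ) ξ := by
    intro ξ
    have hh : HasDerivAt hhat (deriv hhat (-k + ξ / s)) (-k + ξ / s) :=
      (hsm.differentiable (by simp) (-k + ξ / s)).hasDerivAt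
    exact HasDerivAt.scomp ξ hh (hφ ξ)
  have hφc : Continuous (fun ξ : ℝ => -k + ξ / s) := by continuity
  have hg'cont : Continuous g' := ((hdc.comp hφc).const_smul (1 / s))
  have hgM : ∀ ξ, ‖g ξ‖ ≤ M := fun ξ => hM _
  -- integrability and L¹ norm of g'
  have hcomp_int : Integrable (fun ξ : ℝ => deriv hhat (-k + ξ / s)) := by
    have h1 : Integrable (fun y : ℝ => deriv hhat (-k + y)) :=
      hdint.comp_add_left (-k)
    have h2 := h1.comp_div (hs0.ne')
    simpa using h2
  have hg'int : Integrable g' := hcomp_int.smul (1 / s)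
  have hg'L1 : ∫ ξ, ‖g' ξ‖ ≤ M₁ := by
    have hnorm : ∀ ξ : ℝ, ‖g' ξ‖ = (1 / s) * ‖deriv hhat (-k + ξ / s)‖ := by
      intro ξ
      rw [hg'_def]
      simp [norm_smul, abs_of_pos, hs0, Real.norm_eq_abs, abs_of_pos (by positivity : (0:ℝ) < 1/s)]
    apply le_of_eq
    calc ∫ ξ, ‖g' ξ‖ = ∫ ξ, (1 / s) * ‖deriv hhat (-k + ξ / s)‖ := by
          congr 1; ext ξ; exact hnorm ξ
      _ = (1 / s) * ∫ ξ, ‖deriv hhat (-k + ξ / s)‖ := integral_const_mul _ _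
      _ = (1 / s) * (|s| • ∫ y, ‖deriv hhat (-k + y)‖) := by
          rw [MeasureTheory.Measure.integral_comp_div (fun y => ‖deriv hhat (-k + y)‖) s]
      _ = (1 / s) * (s * ∫ y, ‖deriv hhat (-k + y)‖) := by
          rw [abs_of_pos hs0, smul_eq_mul]
      _ = ∫ y, ‖deriv hhat (-k + y)‖ := by rw [one_div, inv_mul_cancel_left₀ hs0.ne']
      _ = M₁ := by
          rw [hM₁_def]
          exact integral_add_left_eq_self (fun y => ‖deriv hhat y‖) (-k)
  have hcont_integrand : Continuous fun ξ : ℝ => Complex.exp (I * (ξ:ℂ)^2) * g ξ := by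
    apply Continuous.mul
    · exact Complex.continuous_exp.comp (continuous_const.mul (Complex.continuous_ofReal.pow 2))
    · exact hsm.continuous.comp hφc
  have hii : ∀ a b : ℝ, IntervalIntegrable (fun ξ : ℝ => Complex.exp (I * (ξ:ℂ)^2) * g ξ)
      volume a b := fun a b => hcont_integrand.intervalIntegrable a b
  have hsmall : ∀ a b : ℝ, |b - a| ≤ 1 →
      ‖∫ ξ in a..b, Complex.exp (I * (ξ:ℂ)^2) * g ξ‖ ≤ M := by
    intro a b hab
    have := intervalIntegral.norm_integral_le_of_norm_le_const
      (C := M) (f := fun ξ : ℝ => Complex.exp (I * (ξ:ℂ)^2) * g ξ) (a := a) (b := b) ?_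
    · calc ‖∫ ξ in a..b, Complex.exp (I * (ξ:ℂ)^2) * g ξ‖ ≤ M * |b - a| := this
        _ ≤ M * 1 := by nlinarith [abs_nonneg (b-a)]
        _ = M := mul_one M
    · intro x _
      rw [norm_mul, exp_norm_one', one_mul]
      exact hgM x
  rcases le_or_gt l (-1) with hl | hl
  · -- l ≤ -1
    have hsplit : (∫ ξ in (0:ℝ)..(-1), Complex.exp (I * (ξ:ℂ)^2) * g ξ)
        + ∫ ξ in (-1:ℝ)..l, Complex.exp (I * (ξ:ℂ)^2) * g ξ
        = ∫ ξ in (0:ℝ)..l, Complex.exp (I * (ξ:ℂ)^2) * g ξ :=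
      intervalIntegral.integral_add_adjacent_intervals (hii 0 (-1)) (hii (-1) l)
    rw [← hsplit]
    have h1 : ‖∫ ξ in (0:ℝ)..(-1), Complex.exp (I * (ξ:ℂ)^2) * g ξ‖ ≤ M :=
      hsmall 0 (-1) (by norm_num)
    have h2 : ‖∫ ξ in (-1:ℝ)..l, Complex.exp (I * (ξ:ℂ)^2) * g ξ‖ ≤ 2 * M + M₁ := by
      rw [intervalIntegral.integral_symm l (-1), norm_neg]
      apply ibp_bound' g g' M M₁ hgM hder hg'cont hg'int hg'L1 l (-1) hl
      intro x hx
      rw [_root_.abs_of_nonpos (by linarith [hx.2])]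
      linarith [hx.2]
    calc ‖_ + _‖ ≤ M + (2 * M + M₁) := le_trans (norm_add_le _ _) (add_le_add h1 h2)
      _ ≤ 3 * M + M₁ := by linarith
  rcases le_or_gt 1 l with hl' | hl'
  · -- 1 ≤ l
    have hsplit : (∫ ξ in (0:ℝ)..(1:ℝ), Complex.exp (I * (ξ:ℂ)^2) * g ξ)
        + ∫ ξ in (1:ℝ)..l, Complex.exp (I * (ξ:ℂ)^2) * g ξ
        = ∫ ξ in (0:ℝ)..l, Complex.exp (I * (ξ:ℂ)^2) * g ξ :=
      intervalIntegral.integral_add_adjacent_intervals (hii 0 1) (hii 1 l)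
    rw [← hsplit]
    have h1 : ‖∫ ξ in (0:ℝ)..(1:ℝ), Complex.exp (I * (ξ:ℂ)^2) * g ξ‖ ≤ M :=
      hsmall 0 1 (by norm_num)
    have h2 : ‖∫ ξ in (1:ℝ)..l, Complex.exp (I * (ξ:ℂ)^2) * g ξ‖ ≤ 2 * M + M₁ := by
      apply ibp_bound' g g' M M₁ hgM hder hg'cont hg'int hg'L1 1 l hl'
      intro x hx
      rw [_root_.abs_of_nonneg (by linarith [hx.1])]
      exact hx.1
    calc ‖_ + _‖ ≤ M + (2 * M + M₁) := le_trans (norm_add_le _ _) (add_le_add h1 h2)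
      _ ≤ 3 * M + M₁ := by linarith
  · -- -1 < l < 1
    have := hsmall 0 l (by rw [sub_zero]; rw [abs_le]; constructor <;> linarith)
    linarith
end
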